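/- arXiv:2206.06538 — 3 statements merged into one kernel-verified Lean document; each statement's English description precedes it below -/
import Mathlib

section
/- Let [u,w] be a Bruhat interval in a Coxeter group W and let s ∈ S with s ∈ D_L(w) and s ∉ D_L(u). Then the map x ↦ sx maps [u,w] to itself and is a special matching of the poset [u,w]. -/
namespace Paper

/-! ### Bruhat order on a Coxeter group -/

variable {B W : Type*} [Group W] {M : CoxeterMatrix B}

/-- One step in the Bruhat order: multiply on the left by a reflection,
increasing the length. -/
def BruhatStep (cs : CoxeterSystem M W) (a b : W) : Prop :=
  ∃ t : W, cs.IsReflection t ∧ b = t * a ∧ cs.length a < cs.length b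

/-- The Bruhat order on a Coxeter group. -/
def BruhatLE (cs : CoxeterSystem M W) : W → W → Prop :=
  Relation.ReflTransGen (BruhatStep cs)

theorem BruhatLE.length_le {cs : CoxeterSystem M W} {a b : W} (h : BruhatLE cs a b) :
    cs.length a ≤ cs.length b := by
  induction h with
  | refl => exact le_rfl
  | tail _ h ih => obtain ⟨t, -, -, hlt⟩ := h; exact ih.trans hlt.le

theorem BruhatLE.length_lt {cs : CoxeterSystem M W} {a b : W} (h : BruhatLE cs a b)
    (hne : a ≠ b) : cs.length a < cs.length b := by
  rcases Relation.ReflTransGen.cases_head h with h' | ⟨c, hc, h'⟩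
  · exact absurd h' hne
  · obtain ⟨t, -, -, hlt⟩ := hc
    exact lt_of_lt_of_le hlt (BruhatLE.length_le h')

theorem BruhatLE.antisymm {cs : CoxeterSystem M W} {a b : W} (h1 : BruhatLE cs a b)
    (h2 : BruhatLE cs b a) : a = b := by
  by_contra hne
  exact absurd (BruhatLE.length_lt h1 hne) (not_lt.mpr (BruhatLE.length_le h2))

/-- The Bruhat interval `[u,w]`, as a type. -/
abbrev BruhatInterval (cs : CoxeterSystem M W) (u w : W) : Type _ :=
  {y : W // BruhatLE cs u y ∧ BruhatLE cs y w}

/-- The Bruhat interval `[u,w]` is a poset under the Bruhat order. -/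
instance (cs : CoxeterSystem M W) (u w : W) : PartialOrder (BruhatInterval cs u w) where
  le a b := BruhatLE cs a.1 b.1
  le_refl _ := Relation.ReflTransGen.refl
  le_trans _ _ _ := Relation.ReflTransGen.trans
  le_antisymm _ _ h1 h2 := Subtype.ext (BruhatLE.antisymm h1 h2)

/-- A principal order ideal `{v : v ≤ x}` of the Bruhat order, as a type. -/
abbrev BruhatIdeal (cs : CoxeterSystem M W) (x : W) : Type _ :=
  {v : W // BruhatLE cs v x}

/-- A principal order ideal of the Bruhat order is a poset under the Bruhat order. -/
instance (cs : CoxeterSystem M W) (x : W) : PartialOrder (BruhatIdeal cs x) where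
  le a b := BruhatLE cs a.1 b.1
  le_refl _ := Relation.ReflTransGen.refl
  le_trans _ _ _ := Relation.ReflTransGen.trans
  le_antisymm _ _ h1 h2 := Subtype.ext (BruhatLE.antisymm h1 h2)

/-! ### Posets: matchings, special matchings and zircons -/

/-- A matching of a poset: an involution matching each element with an element
covering it or covered by it. -/
def IsMatching {α : Type*} [PartialOrder α] (f : α → α) : Prop :=
  Function.Involutive f ∧ ∀ x : α, f x ⋖ x ∨ x ⋖ f x

/-- A special matching of a poset. -/
def IsSpecialMatching {α : Type*} [PartialOrder α] (f : α → α) : Prop :=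
  IsMatching f ∧ ∀ x y : α, x ⋖ y → f x = y ∨ f x < f y

/-- A zircon: a poset in which the principal order ideal of every non-minimal element is
finite and has a special matching. -/
def IsZircon (α : Type*) [PartialOrder α] : Prop :=
  ∀ x : α, (∃ y : α, y < x) →
    ({v : α | v ≤ x}.Finite ∧
      ∃ f : {v : α // v ≤ x} → {v : α // v ≤ x}, IsSpecialMatching f)

/-- The degree of `v` in the Bruhat graph of the interval `[u,w]`: the number of `y ∈ [u,w]`
such that `v⁻¹ * y` is a reflection. -/
noncomputable def bruhatDeg (cs : CoxeterSystem M W) (u w v : W) : ℕ :=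
  Nat.card {y : W // (BruhatLE cs u y ∧ BruhatLE cs y w) ∧ cs.IsReflection (v⁻¹ * y)}

/-- A Bruhat interval `[u,w]` is rationally smooth if `deg_{y,w}(y) = ℓ(w) - ℓ(y)` for all
`y ∈ [u,w]` (Carrell–Peterson). -/
def RationallySmooth (cs : CoxeterSystem M W) (u w : W) : Prop :=
  ∀ y : W, BruhatLE cs u y → BruhatLE cs y w →
    bruhatDeg cs y w y = cs.length w - cs.length y


section Aux


/-- Carrier for the reflection-parity representation. -/
@[ext] structure Par (W : Type*) where
  fn : W → ZMod 2
  el : W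


lemma zmod2_add_self (x : ZMod 2) : x + x = 0 := by
  rw [← two_mul, show (2 : ZMod 2) = 0 from rfl, zero_mul]

instance : Mul (Par W) :=
  ⟨fun p q => ⟨fun t => p.fn t + q.fn (p.el⁻¹ * t * p.el), p.el * q.el⟩⟩
instance : One (Par W) := ⟨⟨0, 1⟩⟩
instance : Inv (Par W) := ⟨fun p => ⟨fun t => p.fn (p.el * t * p.el⁻¹), p.el⁻¹⟩⟩

@[simp] lemma Par.mul_fn (p q : Par W) (t : W) :
    (p * q).fn t = p.fn t + q.fn (p.el⁻¹ * t * p.el) := rfl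
@[simp] lemma Par.mul_el (p q : Par W) : (p * q).el = p.el * q.el := rfl
@[simp] lemma Par.one_fn (t : W) : (1 : Par W).fn t = 0 := rfl
@[simp] lemma Par.one_el : (1 : Par W).el = 1 := rfl
@[simp] lemma Par.inv_fn (p : Par W) (t : W) :
    (p⁻¹).fn t = p.fn (p.el * t * p.el⁻¹) := rfl
@[simp] lemma Par.inv_el (p : Par W) : (p⁻¹).el = p.el⁻¹ := rfl

instance : Group (Par W) where
  mul_assoc p q r := by
    ext t
    · simp [add_assoc, mul_assoc]
    · simp [mul_assoc]
  one_mul p := by ext t <;> simp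
  mul_one p := by ext t <;> simp
  inv_mul_cancel p := by
    ext t
    · simp only [Par.mul_fn, Par.inv_fn, Par.inv_el, Par.one_fn, inv_inv]
      exact zmod2_add_self _
    · simp


open CoxeterSystem List

/-- Indicator function with values in `ZMod 2`. -/
noncomputable def ind (x : W) : W → ZMod 2 := fun t =>
  @ite _ (t = x) (Classical.dec _) 1 0

lemma ind_conj (x w t : W) : ind x (w⁻¹ * t * w) = ind (w * x * w⁻¹) t := by
  classical
  unfold ind
  exact if_congr ⟨fun h => by rw [← h]; group, fun h => by rw [h]; group⟩ rfl rfl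

lemma Par.pow_el (p : Par W) (k : ℕ) : (p ^ k).el = p.el ^ k := by
  induction k with
  | zero => simp [pow_zero]
  | succ k ih => rw [pow_succ, pow_succ, Par.mul_el, ih]

lemma Par.pow_fn (p : Par W) (k : ℕ) (t : W) :
    (p ^ k).fn t = ∑ r ∈ Finset.range k, p.fn ((p.el ^ r)⁻¹ * t * p.el ^ r) := by
  induction k generalizing t with
  | zero => simp [pow_zero]
  | succ k ih =>
    rw [pow_succ, Par.mul_fn, ih, Finset.sum_range_succ, Par.pow_el]

lemma mul_pow_swap (a b : W) (n : ℕ) : a * (b * a) ^ n = (a * b) ^ n * a :=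
  (SemiconjBy.pow_right (by simp [SemiconjBy, mul_assoc]) n)

lemma sum_pair_range (f : ℕ → ZMod 2) (m : ℕ) :
    ∑ r ∈ Finset.range m, (f (2*r) + f (2*r+1)) = ∑ k ∈ Finset.range (m+m), f k := by
  induction m with
  | zero => simp
  | succ n ih =>
    rw [Finset.sum_range_succ, ih, show n+1+(n+1) = (n+n)+1+1 by ring,
      Finset.sum_range_succ, Finset.sum_range_succ, show 2*n = n+n by ring]
    ring

variable {M : CoxeterMatrix B} (cs : CoxeterSystem M W)

local prefix:100 "σ" => cs.simple

/-- The generators of the parity representation. -/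
noncomputable def parGen (i : B) : Par W := ⟨ind (σ i), σ i⟩

@[simp] lemma parGen_fn (i : B) (t : W) : (parGen cs i).fn t = ind (σ i) t := rfl
@[simp] lemma parGen_el (i : B) : (parGen cs i).el = σ i := rfl

lemma parGen_liftable : CoxeterMatrix.IsLiftable M (parGen cs) := by
  intro i j
  set a := σ i with ha
  set b := σ j with hb
  set m := M i j with hm
  have hg : (a * b) ^ m = 1 := cs.simple_mul_simple_pow i j
  have hinv : a⁻¹ = a := cs.inv_simple i
  set c : ℕ → W := fun k => (a * b) ^ k * a with hc
  have hconj : ∀ r : ℕ, ((a * b) ^ r)⁻¹ = (b * a) ^ r := by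
    intro r
    rw [← inv_pow, mul_inv_rev, hinv, cs.inv_simple j]
  have hc1 : ∀ r : ℕ, (a*b) ^ r * a * ((a*b) ^ r)⁻¹ = c (2*r) := by
    intro r
    simp only [hc, hconj]
    calc (a*b)^r * a * (b*a)^r = (a*b)^r * (a * (b*a)^r) := mul_assoc _ _ _
      _ = (a*b)^r * ((a*b)^r * a) := by rw [mul_pow_swap]
      _ = ((a*b)^r * (a*b)^r) * a := (mul_assoc _ _ _).symm
      _ = (a*b)^(2*r) * a := by rw [two_mul, pow_add]
  have hc2 : ∀ r : ℕ, (a*b) ^ r * (a*b*a) * ((a*b) ^ r)⁻¹ = c (2*r+1) := by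
    intro r
    simp only [hc, hconj]
    calc (a*b)^r * (a*b*a) * (b*a)^r = (a*b)^r * (a*b) * (a * (b*a)^r) := by
          simp only [mul_assoc]
      _ = (a*b)^r * (a*b) * ((a*b)^r * a) := by rw [mul_pow_swap]
      _ = (a*b)^(2*r+1) * a := by
          rw [show 2*r+1 = r+1+r by ring, pow_add, pow_add, pow_one]
          simp only [mul_assoc]
  have hc3 : ∀ k : ℕ, c (m + k) = c k := by
    intro k
    simp only [hc, pow_add, hg, one_mul]
  show (parGen cs i * parGen cs j) ^ m = 1
  ext t
  · rw [Par.pow_fn]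
    simp only [Par.mul_fn, Par.mul_el, parGen_fn, parGen_el, Par.one_fn, ← ha, ← hb]
    have step : ∀ r, ind a (((a*b)^r)⁻¹ * t * (a*b)^r)
        + ind b (a⁻¹ * (((a*b)^r)⁻¹ * t * (a*b)^r) * a)
        = ind (c (2*r)) t + ind (c (2*r+1)) t := by
      intro r
      congr 1
      · rw [ind_conj, hc1]
      · rw [show a⁻¹ * (((a*b)^r)⁻¹ * t * (a*b)^r) * a
              = ((a*b)^r * a)⁻¹ * t * ((a*b)^r * a) by
            rw [mul_inv_rev]; simp only [mul_assoc]]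
        rw [ind_conj, show (a*b)^r * a * b * ((a*b)^r * a)⁻¹
              = (a*b)^r * (a*b*a) * ((a*b)^r)⁻¹ by
            rw [mul_inv_rev, hinv]; simp only [mul_assoc], hc2]
    rw [Finset.sum_congr rfl (fun r _ => step r)]
    calc ∑ r ∈ Finset.range m, (ind (c (2*r)) t + ind (c (2*r+1)) t)
        = ∑ k ∈ Finset.range (m+m), ind (c k) t :=
          sum_pair_range (fun k => ind (c k) t) m
      _ = (∑ k ∈ Finset.range m, ind (c k) t)
            + ∑ k ∈ Finset.range m, ind (c (m+k)) t :=
          Finset.sum_range_add (fun k => ind (c k) t) m m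
      _ = 0 := by
          rw [Finset.sum_congr rfl (fun k _ => congrArg (fun x => ind x t) (hc3 k))]
          exact zmod2_add_self _
  · rw [Par.pow_el]
    simp only [Par.mul_el, parGen_el, ← ha, ← hb]
    rw [hg]; rfl

/-- The parity representation. -/
noncomputable def psi : W →* Par W := cs.lift ⟨parGen cs, parGen_liftable cs⟩

/-- Parity of the number of times `t` occurs in the inversion sequence of a word for `w`. -/
noncomputable def NPar (w t : W) : ZMod 2 := (psi cs w).fn t


lemma ind_apply [DecidableEq W] (x t : W) : ind x t = if t = x then 1 else 0 := by
  by_cases h : t = x <;> simp [ind, h]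

lemma ind_self (x : W) : ind x x = 1 := by
  unfold ind; rw [if_pos rfl]

/-- Projection `Par W →* W`. -/
def Par.elHom : Par W →* W where
  toFun := Par.el
  map_one' := rfl
  map_mul' _ _ := rfl

lemma psi_simple (i : B) : psi cs (σ i) = parGen cs i :=
  cs.lift_apply_simple (parGen_liftable cs) i

lemma psi_el (w : W) : (psi cs w).el = w := by
  have : (Par.elHom.comp (psi cs)) = MonoidHom.id W := by
    apply cs.ext_simple
    intro i
    simp [Par.elHom, psi_simple]
  calc (psi cs w).el = (Par.elHom.comp (psi cs)) w := rfl
    _ = w := by rw [this]; rfl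

lemma NPar_mul (x y t : W) :
    NPar cs (x * y) t = NPar cs x t + NPar cs y (x⁻¹ * t * x) := by
  unfold NPar
  rw [map_mul, Par.mul_fn, psi_el]

lemma NPar_one (t : W) : NPar cs 1 t = 0 := by
  unfold NPar; rw [map_one]; rfl

lemma NPar_simple (i : B) (t : W) : NPar cs (σ i) t = ind (σ i) t := by
  unfold NPar; rw [psi_simple]; rfl

lemma NPar_inv (x r : W) : NPar cs x⁻¹ (x⁻¹ * r * x) = NPar cs x r := by
  have h := NPar_mul cs x x⁻¹ r
  rw [mul_inv_cancel, NPar_one] at h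
  calc NPar cs x⁻¹ (x⁻¹ * r * x)
      = NPar cs x r + (NPar cs x r + NPar cs x⁻¹ (x⁻¹ * r * x)) := by
        rw [← add_assoc, zmod2_add_self, zero_add]
    _ = NPar cs x r := by rw [← h, add_zero]

/-- A reflection has odd parity at itself. -/
lemma NPar_isReflection_self {t : W} (ht : cs.IsReflection t) : NPar cs t t = 1 := by
  obtain ⟨v, i, rfl⟩ := ht
  set a := σ i with ha
  rw [mul_assoc v a v⁻¹]
  set t := v * (a * v⁻¹) with hts
  have hvt : v⁻¹ * t * v = a := by rw [hts]; group
  rw [NPar_mul cs v (a * v⁻¹) t, hvt, NPar_mul cs a v⁻¹ a,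
    show a⁻¹ * a * a = a by rw [inv_mul_cancel, one_mul], NPar_simple, ← ha, ind_self]
  have h2 : NPar cs v⁻¹ a = NPar cs v t := by rw [← hvt]; exact NPar_inv cs v t
  rw [h2]
  have : ∀ x : ZMod 2, x + (1 + x) = 1 := by decide
  exact this _


local prefix:100 "ℓ" => cs.length
local prefix:100 "π" => cs.wordProd
local prefix:100 "lis" => cs.leftInvSeq

lemma NPar_wordProd [DecidableEq W] (ω : List B) (t : W) :
    NPar cs (π ω) t = ((lis ω).count t : ZMod 2) := by
  induction ω generalizing t with
  | nil => simp [NPar_one]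
  | cons i ω ih =>
    rw [cs.wordProd_cons, NPar_mul, NPar_simple, ih]
    have hlis : lis (i :: ω) = σ i :: List.map (MulAut.conj (σ i)) (lis ω) := rfl
    rw [hlis, List.count_cons]
    have ha : (σ i)⁻¹ = σ i := cs.inv_simple i
    have hconj : t = (MulAut.conj (σ i)) ((σ i)⁻¹ * t * σ i) := by
      rw [MulAut.conj_apply]
      group
    rw [show (List.map (MulAut.conj (σ i)) (lis ω)).count t
          = (lis ω).count ((σ i)⁻¹ * t * σ i) by
        nth_rewrite 1 [hconj]
        exact List.count_map_of_injective _ _ (MulAut.conj (σ i)).injective _]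
    rw [ind_apply]
    push_cast
    rw [add_comm]
    congr 1
    simp only [beq_iff_eq]
    by_cases h : t = σ i
    · rw [if_pos h, if_pos h.symm]
    · rw [if_neg h, if_neg (fun hh => h hh.symm)]

/-- Strong exchange property. -/
lemma strong_exchange {ω : List B} (hω : cs.IsReduced ω) {t : W}
    (ht : cs.IsReflection t) (hlt : ℓ (t * π ω) < ℓ (π ω)) :
    t ∈ lis ω := by
  classical
  set w := π ω with hw
  have hN : NPar cs w t = 1 := by
    obtain ⟨α, hαred, hα⟩ := cs.exists_reduced_word' (t * w)
    have htw : w = t * (t * w) := by rw [← mul_assoc, ht.mul_self, one_mul]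
    have hnot : t ∉ lis α := by
      intro hmem
      have := cs.isLeftInversion_of_mem_leftInvSeq hαred hmem
      rw [← hα] at this
      have h2 := this.2
      rw [← htw] at h2
      omega
    have hcount : ((lis α).count t : ZMod 2) = 0 := by
      rw [List.count_eq_zero_of_not_mem hnot]; rfl
    rw [htw, NPar_mul, NPar_isReflection_self cs ht,
      show t⁻¹ * t * t = t by rw [ht.inv]; rw [ht.mul_self, one_mul], hα,
      NPar_wordProd, hcount, add_zero]
  by_contra hmem
  rw [NPar_wordProd, List.count_eq_zero_of_not_mem hmem] at hN
  exact absurd hN (by decide)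

/-- Strong exchange, index version. -/
lemma strong_exchange' {ω : List B} (hω : cs.IsReduced ω) {t : W}
    (ht : cs.IsReflection t) (hlt : ℓ (t * π ω) < ℓ (π ω)) :
    ∃ j < ω.length, t * π ω = π (ω.eraseIdx j) := by
  obtain ⟨j, hj', hje⟩ := List.getElem_of_mem (strong_exchange cs hω ht hlt)
  have hj : j < ω.length := by rwa [cs.length_leftInvSeq] at hj'
  refine ⟨j, hj, ?_⟩
  rw [← hje, ← List.getD_eq_getElem (cs.leftInvSeq ω) 1 hj']
  exact cs.getD_leftInvSeq_mul_wordProd ω j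



/-! ### Elementary Bruhat steps -/


lemma le_simple_mul {a : W} (i : B) (h : ℓ a < ℓ (σ i * a)) :
    BruhatLE cs a (σ i * a) :=
  Relation.ReflTransGen.single ⟨σ i, cs.isReflection_simple i, rfl, h⟩

lemma simple_mul_le {a : W} (i : B) (h : ℓ (σ i * a) < ℓ a) :
    BruhatLE cs (σ i * a) a :=
  Relation.ReflTransGen.single ⟨σ i, cs.isReflection_simple i,
    (cs.simple_mul_simple_cancel_left i).symm, h⟩

lemma refl_mul_le {a : W} {t : W} (ht : cs.IsReflection t) (h : ℓ a < ℓ (t * a)) :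
    BruhatLE cs a (t * a) :=
  Relation.ReflTransGen.single ⟨t, ht, rfl, h⟩

/-- In the descent case, the length goes down by exactly one. -/
lemma length_desc {w : W} {i : B} (h : ℓ (σ i * w) < ℓ w) : ℓ (σ i * w) + 1 = ℓ w := by
  rcases cs.length_simple_mul w i with h' | h'
  · omega
  · exact h'

lemma length_asc {w : W} {i : B} (h : ℓ w < ℓ (σ i * w)) : ℓ (σ i * w) = ℓ w + 1 := by
  rcases cs.length_simple_mul w i with h' | h'
  · exact h'
  · omega

/-- The key consequence of the strong exchange property used in the lifting lemma. -/
lemma word_trick {v w t : W} {i : B} (hrt : cs.IsReflection t) (hwv : w = t * v)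
    (hlvw : ℓ v < ℓ w) (hdesc : ℓ (σ i * w) < ℓ w) (hascv : ℓ v < ℓ (σ i * v))
    (hcase : ℓ (σ i * w) < ℓ (σ i * v)) : v = σ i * w := by
  have hlw1 : ℓ (σ i * w) + 1 = ℓ w := length_desc cs hdesc
  have hlv1 : ℓ (σ i * v) = ℓ v + 1 := length_asc cs hascv
  have hwvlen : ℓ w = ℓ v + 1 := by omega
  obtain ⟨α, hαred, hα⟩ := cs.exists_reduced_word' (σ i * w)
  have hαlen : α.length = ℓ (σ i * w) := by
    rw [← hαred]; rw [← hα]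
  have hπ : π (i :: α) = w := by
    rw [cs.wordProd_cons, ← hα, cs.simple_mul_simple_cancel_left]
  have hred : cs.IsReduced (i :: α) := by
    unfold CoxeterSystem.IsReduced
    rw [hπ, List.length_cons, hαlen]
    omega
  have htw : t * w = v := by
    rw [hwv, ← mul_assoc, hrt.mul_self, one_mul]
  have hltv : ℓ (t * π (i :: α)) < ℓ (π (i :: α)) := by
    rw [hπ, htw]; exact hlvw
  obtain ⟨j, hj, hje⟩ := strong_exchange' cs hred hrt hltv
  have hv : v = π ((i :: α).eraseIdx j) := by rw [← hje, hπ, htw]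
  match j with
  | 0 =>
    rw [List.eraseIdx_cons_zero, ← hα] at hv
    exact hv
  | (k+1) =>
    exfalso
    rw [List.eraseIdx_cons_succ] at hv
    have hk : k < α.length := by
      simp only [List.length_cons] at hj; omega
    have hsv : σ i * v = π (α.eraseIdx k) := by
      rw [hv, cs.wordProd_cons, cs.simple_mul_simple_cancel_left]
    have hlen : ℓ (σ i * v) ≤ (α.eraseIdx k).length := by
      rw [hsv]; exact cs.length_wordProd_le _
    rw [List.length_eraseIdx_of_lt hk] at hlen
    omega

/-- The lifting property (Deodhar's property Z), proved by induction on `ℓ w`. -/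
lemma lifting_aux : ∀ n : ℕ, ∀ u w : W, BruhatLE cs u w → ℓ w ≤ n → ∀ i : B,
    ℓ u < ℓ (σ i * u) →
    ((ℓ w < ℓ (σ i * w) → BruhatLE cs (σ i * u) (σ i * w)) ∧
     (ℓ (σ i * w) < ℓ w → BruhatLE cs (σ i * u) w) ∧
     (ℓ (σ i * w) < ℓ w → BruhatLE cs u (σ i * w))) := by
  intro n
  induction n with
  | zero =>
    intro u w huw hlen i hasc
    rcases Relation.ReflTransGen.cases_tail huw with heq | ⟨v, huv, hstep⟩
    · subst heq
      refine ⟨fun _ => Relation.ReflTransGen.refl, fun h => ?_, fun h => ?_⟩ <;> omega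
    · obtain ⟨t, hrt, hwv, hlvw⟩ := hstep
      omega
  | succ n ih =>
    intro u w huw hlen i hasc
    rcases Relation.ReflTransGen.cases_tail huw with heq | ⟨v, huv, hstep⟩
    · subst heq
      refine ⟨fun _ => Relation.ReflTransGen.refl, fun h => ?_, fun h => ?_⟩ <;> omega
    · obtain ⟨t, hrt, hwv, hlvw⟩ := hstep
      have hlv : ℓ v ≤ n := by omega
      have ihv := ih u v huv hlv i hasc
      have ht' : cs.IsReflection (σ i * t * (σ i)⁻¹) := hrt.conj (σ i)
      have haw : σ i * w = (σ i * t * (σ i)⁻¹) * (σ i * v) := by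
        rw [hwv]; group
      refine ⟨?_, ?_, ?_⟩
      · -- both ascents : σ u ≤ σ w
        intro hascw
        rcases Nat.lt_or_ge (ℓ v) (ℓ (σ i * v)) with hav | hav
        · -- v ascends
          have h1 : BruhatLE cs (σ i * u) (σ i * v) := ihv.1 hav
          have hstep2 : BruhatLE cs (σ i * v) (σ i * w) := by
            rw [haw]
            refine refl_mul_le cs ht' ?_
            rw [← haw, length_asc cs hascw, length_asc cs hav]
            omega
          exact h1.trans hstep2
        · -- v descends
          have hdv : ℓ (σ i * v) < ℓ v := by
            rcases Nat.lt_or_ge (ℓ (σ i * v)) (ℓ v) with h | h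
            · exact h
            · exact absurd (le_antisymm hav h) (cs.length_simple_mul_ne v i)
          have h1 : BruhatLE cs (σ i * u) v := (ihv.2.1) hdv
          have h2 : BruhatLE cs v w := Relation.ReflTransGen.single ⟨t, hrt, hwv, hlvw⟩
          have h3 : BruhatLE cs w (σ i * w) := le_simple_mul cs i hascw
          exact (h1.trans h2).trans h3
      · -- u ascends, w descends : σ u ≤ w
        intro hdescw
        rcases Nat.lt_or_ge (ℓ (σ i * v)) (ℓ v) with hdv | hav
        · have h1 : BruhatLE cs (σ i * u) v := (ihv.2.1) hdv
          exact h1.trans (Relation.ReflTransGen.single ⟨t, hrt, hwv, hlvw⟩)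
        · have hav : ℓ v < ℓ (σ i * v) := by
            rcases Nat.lt_or_ge (ℓ v) (ℓ (σ i * v)) with h | h
            · exact h
            · exact absurd (le_antisymm hav h).symm (cs.length_simple_mul_ne v i)
          have h1 : BruhatLE cs (σ i * u) (σ i * v) := ihv.1 hav
          rcases Nat.lt_or_ge (ℓ (σ i * v)) (ℓ (σ i * w)) with hc | hc
          · -- σ v ≤ σ w ≤ w
            have h2 : BruhatLE cs (σ i * v) (σ i * w) := by
              rw [haw]
              exact refl_mul_le cs ht' (by rw [← haw]; exact hc)
            have h3 : BruhatLE cs (σ i * w) w := simple_mul_le cs i hdescw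
            exact (h1.trans h2).trans h3
          · have hc' : ℓ (σ i * w) < ℓ (σ i * v) := by
              rcases Nat.lt_or_ge (ℓ (σ i * w)) (ℓ (σ i * v)) with h | h
              · exact h
              · exfalso
                have : σ i * w = (σ i * t * (σ i)⁻¹) * (σ i * v) := haw
                have hne := ht'.length_mul_right_ne (σ i * v)
                rw [← this] at hne
                omega
            have hveq : v = σ i * w := word_trick cs hrt hwv hlvw hdescw hav hc'
            have h4 : σ i * v = w := by
              rw [hveq, cs.simple_mul_simple_cancel_left]
            rw [h4] at h1
            exact h1
      · -- u ascends, w descends : u ≤ σ w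
        intro hdescw
        rcases Nat.lt_or_ge (ℓ (σ i * v)) (ℓ v) with hdv | hav
        · have h1 : BruhatLE cs u (σ i * v) := (ihv.2.2) hdv
          have h2 : BruhatLE cs (σ i * v) (σ i * w) := by
            rw [haw]
            refine refl_mul_le cs ht' ?_
            rw [← haw]
            have := length_desc cs hdescw
            have := length_desc cs hdv
            omega
          exact h1.trans h2
        · have hav : ℓ v < ℓ (σ i * v) := by
            rcases Nat.lt_or_ge (ℓ v) (ℓ (σ i * v)) with h | h
            · exact h
            · exact absurd (le_antisymm hav h).symm (cs.length_simple_mul_ne v i)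
          rcases Nat.lt_or_ge (ℓ (σ i * v)) (ℓ (σ i * w)) with hc | hc
          · have h2 : BruhatLE cs v (σ i * v) := le_simple_mul cs i hav
            have h3 : BruhatLE cs (σ i * v) (σ i * w) := by
              rw [haw]
              exact refl_mul_le cs ht' (by rw [← haw]; exact hc)
            exact (huv.trans h2).trans h3
          · have hc' : ℓ (σ i * w) < ℓ (σ i * v) := by
              rcases Nat.lt_or_ge (ℓ (σ i * w)) (ℓ (σ i * v)) with h | h
              · exact h
              · exfalso
                have hne := ht'.length_mul_right_ne (σ i * v)
                rw [← haw] at hne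
                omega
            have hveq : v = σ i * w := word_trick cs hrt hwv hlvw hdescw hav hc'
            rw [← hveq]
            exact huv



lemma lift_asc_asc {u w : W} (huw : BruhatLE cs u w) {i : B}
    (h1 : ℓ u < ℓ (σ i * u)) (h2 : ℓ w < ℓ (σ i * w)) :
    BruhatLE cs (σ i * u) (σ i * w) :=
  (lifting_aux cs (ℓ w) u w huw le_rfl i h1).1 h2

lemma lift_asc_desc {u w : W} (huw : BruhatLE cs u w) {i : B}
    (h1 : ℓ u < ℓ (σ i * u)) (h2 : ℓ (σ i * w) < ℓ w) :
    BruhatLE cs (σ i * u) w :=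
  (lifting_aux cs (ℓ w) u w huw le_rfl i h1).2.1 h2

lemma lift_asc_desc' {u w : W} (huw : BruhatLE cs u w) {i : B}
    (h1 : ℓ u < ℓ (σ i * u)) (h2 : ℓ (σ i * w) < ℓ w) :
    BruhatLE cs u (σ i * w) :=
  (lifting_aux cs (ℓ w) u w huw le_rfl i h1).2.2 h2

lemma lift_desc_desc {u w : W} (huw : BruhatLE cs u w) {i : B}
    (h1 : ℓ (σ i * u) < ℓ u) (h2 : ℓ (σ i * w) < ℓ w) :
    BruhatLE cs (σ i * u) (σ i * w) := by
  have h3 : BruhatLE cs (σ i * u) w := (simple_mul_le cs i h1).trans huw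
  have h4 : ℓ (σ i * u) < ℓ (σ i * (σ i * u)) := by
    rw [cs.simple_mul_simple_cancel_left]; exact h1
  exact lift_asc_desc' cs h3 h4 h2

lemma simple_mul_ne (y : W) (i : B) : σ i * y ≠ y :=
  fun h => cs.length_simple_mul_ne y i (congrArg cs.length h)

end Aux

/-- If `s ∈ D_L(w) \ D_L(u)`, then `x ↦ s * x` maps the Bruhat interval
`[u,w]` to itself and is a special matching of the poset `[u,w]`. -/
theorem descent_special_matching_of_interval
    {B W : Type*} [Group W] {M : CoxeterMatrix B} (cs : CoxeterSystem M W)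
    (u w : W) (huw : BruhatLE cs u w) (hne : u ≠ w)
    (i : B) (hw : cs.IsLeftDescent w i) (hu : ¬ cs.IsLeftDescent u i) :
    (∀ y : W, BruhatLE cs u y → BruhatLE cs y w →
      (BruhatLE cs u (cs.simple i * y) ∧ BruhatLE cs (cs.simple i * y) w)) ∧
    ∃ f : BruhatInterval cs u w → BruhatInterval cs u w,
      (∀ y : BruhatInterval cs u w, (f y).1 = cs.simple i * y.1) ∧ IsSpecialMatching f := by

  classical
  have hadesc : cs.length (cs.simple i * w) < cs.length w := hw
  have huasc : cs.length u < cs.length (cs.simple i * u) := by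
    have hne' := cs.length_simple_mul_ne u i
    have hu' : ¬ cs.length (cs.simple i * u) < cs.length u := hu
    omega
  have part1 : ∀ y : W, BruhatLE cs u y → BruhatLE cs y w →
      BruhatLE cs u (cs.simple i * y) ∧ BruhatLE cs (cs.simple i * y) w := by
    intro y huy hyw
    rcases Nat.lt_or_ge (cs.length y) (cs.length (cs.simple i * y)) with hay | hay
    · exact ⟨huy.trans (le_simple_mul cs i hay), lift_asc_desc cs hyw hay hadesc⟩
    · have hdy : cs.length (cs.simple i * y) < cs.length y :=
        lt_of_le_of_ne hay (cs.length_simple_mul_ne y i)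
      exact ⟨lift_asc_desc' cs huy huasc hdy, (simple_mul_le cs i hdy).trans hyw⟩
  refine ⟨part1, ?_⟩
  refine ⟨fun y => ⟨cs.simple i * y.1, part1 y.1 y.2.1 y.2.2⟩, fun y => rfl, ?_, ?_⟩
  · -- IsMatching
    constructor
    · -- involutive
      intro y
      apply Subtype.ext
      show cs.simple i * (cs.simple i * y.1) = y.1
      exact cs.simple_mul_simple_cancel_left i
    · -- matching
      intro x
      rcases Nat.lt_or_ge (cs.length (cs.simple i * x.1)) (cs.length x.1) with hd | hge
      · left
        constructor
        · exact lt_iff_le_and_ne.mpr ⟨simple_mul_le cs i hd,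
            fun he => simple_mul_ne cs x.1 i (congrArg Subtype.val he)⟩
        · intro z hz1 hz2
          obtain ⟨hz1le, hz1ne⟩ := lt_iff_le_and_ne.mp hz1
          obtain ⟨hz2le, hz2ne⟩ := lt_iff_le_and_ne.mp hz2
          have l1 : cs.length (cs.simple i * x.1) < cs.length z.1 :=
            BruhatLE.length_lt hz1le (fun h => hz1ne (Subtype.ext h))
          have l2 : cs.length z.1 < cs.length x.1 :=
            BruhatLE.length_lt hz2le (fun h => hz2ne (Subtype.ext h))
          have := length_desc cs hd
          omega
      · have ha : cs.length x.1 < cs.length (cs.simple i * x.1) :=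
          lt_of_le_of_ne hge fun h => (cs.length_simple_mul_ne x.1 i) h.symm
        right
        constructor
        · exact lt_iff_le_and_ne.mpr ⟨le_simple_mul cs i ha,
            fun he => simple_mul_ne cs x.1 i (congrArg Subtype.val he).symm⟩
        · intro z hz1 hz2
          obtain ⟨hz1le, hz1ne⟩ := lt_iff_le_and_ne.mp hz1
          obtain ⟨hz2le, hz2ne⟩ := lt_iff_le_and_ne.mp hz2
          have l1 : cs.length x.1 < cs.length z.1 :=
            BruhatLE.length_lt hz1le (fun h => hz1ne (Subtype.ext h))
          have l2 : cs.length z.1 < cs.length (cs.simple i * x.1) :=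
            BruhatLE.length_lt hz2le (fun h => hz2ne (Subtype.ext h))
          have := length_asc cs ha
          omega
  · -- special
    intro x y hcov
    have hxy : BruhatLE cs x.1 y.1 := hcov.1.le
    have hnexy : x.1 ≠ y.1 := fun h =>
      (lt_iff_le_and_ne.mp hcov.1).2 (Subtype.ext h)
    rcases Nat.lt_or_ge (cs.length (cs.simple i * x.1)) (cs.length x.1) with hdx | hgex
    · rcases Nat.lt_or_ge (cs.length (cs.simple i * y.1)) (cs.length y.1) with hdy | hgey
      · -- both descents
        right
        refine lt_iff_le_and_ne.mpr ⟨lift_desc_desc cs hxy hdx hdy, fun he => ?_⟩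
        have := congrArg Subtype.val he
        exact hnexy (mul_left_cancel this)
      · -- x descends, y ascends
        have hay : cs.length y.1 < cs.length (cs.simple i * y.1) :=
          lt_of_le_of_ne hgey fun h => (cs.length_simple_mul_ne y.1 i) h.symm
        right
        refine lt_iff_le_and_ne.mpr ⟨?_, fun he => ?_⟩
        · exact ((simple_mul_le cs i hdx).trans hxy).trans (le_simple_mul cs i hay)
        · have := congrArg Subtype.val he
          exact hnexy (mul_left_cancel this)
    · have hax : cs.length x.1 < cs.length (cs.simple i * x.1) :=
        lt_of_le_of_ne hgex fun h => (cs.length_simple_mul_ne x.1 i) h.symm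
      rcases Nat.lt_or_ge (cs.length (cs.simple i * y.1)) (cs.length y.1) with hdy | hgey
      · -- x ascends, y descends
        have hxsy : BruhatLE cs x.1 (cs.simple i * y.1) := lift_asc_desc' cs hxy hax hdy
        by_cases he : cs.simple i * y.1 = x.1
        · left
          apply Subtype.ext
          show cs.simple i * x.1 = y.1
          rw [← he, cs.simple_mul_simple_cancel_left]
        · exfalso
          refine hcov.2 (c := ⟨cs.simple i * y.1, part1 y.1 y.2.1 y.2.2⟩) ?_ ?_
          · exact lt_iff_le_and_ne.mpr ⟨hxsy,
              fun hh => he (congrArg Subtype.val hh).symm⟩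
          · exact lt_iff_le_and_ne.mpr ⟨simple_mul_le cs i hdy,
              fun hh => simple_mul_ne cs y.1 i (congrArg Subtype.val hh)⟩
      · -- both ascents
        have hay : cs.length y.1 < cs.length (cs.simple i * y.1) :=
          lt_of_le_of_ne hgey fun h => (cs.length_simple_mul_ne y.1 i) h.symm
        right
        refine lt_iff_le_and_ne.mpr ⟨lift_asc_asc cs hxy hax hay, fun he => ?_⟩
        have := congrArg Subtype.val he
        exact hnexy (mul_left_cancel this)

end Paper
end

section
/- Let [u,w] be a Bruhat interval in a Coxeter group W and let s ∈ S with s ∉ D_L(u) and su ≰ w. Then ℓ(sw) > ℓ(w), and the map x ↦ sx is a poset isomorphism from [u,w] onto [su,sw]. -/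
namespace Paper

/-! ### Bruhat order on a Coxeter group -/

variable {B W : Type*} [Group W] {M : CoxeterMatrix B}

/-!
Everything rests on the strong exchange condition: if `ℓ(t w) < ℓ(w)` for a reflection `t`,
then `t` occurs in the left inversion sequence of every word for `w`. It is proved with the
reflection representation of `W` on pairs `(t, ε)` (Björner–Brenti, §1.4), whose sign records the
parity of the number of occurrences of `t` in the right inversion sequence of a word. By strong
exchange a Bruhat step `b → w` has `b = s w` or `s b ≤ s w`, and induction along Bruhat chains
gives the lifting property of a simple reflection `s`: if `u ≤ w` and `s w < w`, then `s u ≤ w`,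
and `u ≤ s w` when `s u > u`; moreover `x ↦ s x` preserves and reflects `≤` between `s`-ascents.

If `s u ≰ w`, every `x ∈ [u, w]` is an `s`-ascent (otherwise `s u ≤ x ≤ w`) and every
`z ∈ [s u, s w]` is an `s`-descent (otherwise `z ≤ s (s w) = w`), so `x ↦ s x` and `z ↦ s z`
are mutually inverse order-preserving maps.
-/

open CoxeterSystem List Relation

section StrongExchange

variable (cs : CoxeterSystem M W)

open scoped Classical

lemma simple_mul_mul_simple_eq_simple_iff (i : B) (t : W) :
    cs.simple i * t * cs.simple i = cs.simple i ↔ t = cs.simple i := by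
  rw [mul_eq_right, mul_eq_one_iff_inv_eq, inv_simple, eq_comm]

-- `(t, ε)` stands for a signed reflection; letting `t` range over all of `W` costs nothing.
noncomputable def reflPerm (i : B) : Equiv.Perm (W × ℤˣ) :=
  Function.Involutive.toPerm
    (fun p => (cs.simple i * p.1 * cs.simple i, if p.1 = cs.simple i then -p.2 else p.2))
    (by
      rintro ⟨t, ε⟩
      simp only [simple_mul_mul_simple_eq_simple_iff]
      split_ifs <;> simp [mul_assoc])

lemma reflPerm_apply (i : B) (t : W) (ε : ℤˣ) :
    reflPerm cs i (t, ε) =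
      (cs.simple i * t * cs.simple i, if t = cs.simple i then -ε else ε) := rfl

lemma prod_map_reflPerm_apply (ω : List B) (t : W) (ε : ℤˣ) :
    (ω.map (reflPerm cs)).prod (t, ε) =
      (cs.wordProd ω * t * (cs.wordProd ω)⁻¹, ε * (-1) ^ (cs.rightInvSeq ω).count t) := by
  induction ω with
  | nil => simp
  | cons i ω ih =>
    have hcond : cs.wordProd ω * t * (cs.wordProd ω)⁻¹ = cs.simple i ↔
        (cs.wordProd ω)⁻¹ * cs.simple i * cs.wordProd ω = t := by
      constructor <;> intro h <;> rw [← h] <;> group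
    simp only [map_cons, prod_cons, Equiv.Perm.mul_apply, ih, reflPerm_apply, hcond,
      rightInvSeq, count_cons, beq_iff_eq, wordProd_cons, mul_inv_rev, inv_simple]
    refine Prod.ext (by simp only [mul_assoc]) ?_
    split_ifs <;> simp [pow_succ]

lemma prod_map_alternatingWord_two_mul {G : Type*} [Monoid G] (f : B → G) (i j : B) (n : ℕ) :
    ((alternatingWord i j (2 * n)).map f).prod = (f i * f j) ^ n := by
  induction n with
  | zero => simp [alternatingWord]
  | succ n ih =>
    rw [show 2 * (n + 1) = 2 * n + 1 + 1 by ring, alternatingWord_succ', alternatingWord_succ']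
    simp [ih, pow_succ', mul_assoc]

lemma reverse_alternatingWord_two_mul (i j : B) (n : ℕ) :
    (alternatingWord i j (2 * n)).reverse = alternatingWord j i (2 * n) := by
  induction n with
  | zero => simp [alternatingWord]
  | succ n ih =>
    rw [show 2 * (n + 1) = 2 * n + 1 + 1 by ring, alternatingWord_succ', alternatingWord_succ']
    simp [ih, alternatingWord]

lemma drop_leftInvSeq_alternatingWord (i j : B) :
    (cs.leftInvSeq (alternatingWord i j (2 * M i j))).drop (M i j) =
      (cs.leftInvSeq (alternatingWord i j (2 * M i j))).take (M i j) := by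
  apply ext_getElem (by simp; omega)
  intro k hk _
  simp only [length_drop, length_leftInvSeq, length_alternatingWord] at hk
  rw [getElem_drop, getElem_take, getElem_leftInvSeq_alternatingWord cs i j _ _ (by omega),
    getElem_leftInvSeq_alternatingWord cs i j _ _ (by omega), prod_alternatingWord_eq_mul_pow,
    prod_alternatingWord_eq_mul_pow]
  rw [show (2 * (M i j + k) + 1) / 2 = M i j + k by omega, show (2 * k + 1) / 2 = k by omega,
    pow_add, simple_mul_simple_pow', one_mul]
  simp

lemma even_count_rightInvSeq_braidWord (i j : B) (t : W) :
    Even ((cs.rightInvSeq (alternatingWord i j (2 * M i j))).count t) := by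
  rw [← reverse_alternatingWord_two_mul j i, rightInvSeq_reverse, count_reverse, M.symmetric,
    ← take_append_drop (M j i) (cs.leftInvSeq _), drop_leftInvSeq_alternatingWord, count_append]
  exact Even.add_self _

lemma isLiftable_reflPerm : M.IsLiftable (reflPerm cs) := by
  intro i j
  ext ⟨t, ε⟩ : 1
  rw [← prod_map_alternatingWord_two_mul, prod_map_reflPerm_apply,
    (even_count_rightInvSeq_braidWord cs i j t).neg_one_pow]
  simp [prod_alternatingWord_eq_mul_pow]

noncomputable def reflRep : W →* Equiv.Perm (W × ℤˣ) :=
  cs.lift ⟨reflPerm cs, isLiftable_reflPerm cs⟩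

lemma reflRep_wordProd (ω : List B) :
    reflRep cs (cs.wordProd ω) = (ω.map (reflPerm cs)).prod := by
  rw [wordProd, map_list_prod, List.map_map]
  congr 2
  funext i
  exact cs.lift_apply_simple (isLiftable_reflPerm cs) i

noncomputable def reflSign (w t : W) : ℤˣ := (reflRep cs w (t, 1)).2

lemma reflSign_wordProd (ω : List B) (t : W) :
    reflSign cs (cs.wordProd ω) t = (-1) ^ (cs.rightInvSeq ω).count t := by
  simp [reflSign, reflRep_wordProd, prod_map_reflPerm_apply]

lemma reflRep_apply (w t : W) (ε : ℤˣ) :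
    reflRep cs w (t, ε) = (w * t * w⁻¹, ε * reflSign cs w t) := by
  obtain ⟨ω, rfl⟩ := cs.wordProd_surjective w
  simp only [reflSign, reflRep_wordProd, prod_map_reflPerm_apply, one_mul]

lemma reflSign_mul (w₁ w₂ t : W) :
    reflSign cs (w₁ * w₂) t = reflSign cs w₂ t * reflSign cs w₁ (w₂ * t * w₂⁻¹) := by
  rw [reflSign, map_mul, Equiv.Perm.mul_apply, reflRep_apply cs w₂, reflRep_apply, one_mul]

lemma reflSign_simple_self (i : B) : reflSign cs (cs.simple i) (cs.simple i) = -1 := by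
  simpa using reflSign_wordProd cs [i] (cs.simple i)

lemma reflSign_self {t : W} (ht : cs.IsReflection t) : reflSign cs t t = -1 := by
  obtain ⟨v, i, rfl⟩ := ht
  have hconj : v⁻¹ * (v * cs.simple i * v⁻¹) * v⁻¹⁻¹ = cs.simple i := by group
  have hone : reflSign cs (v * v⁻¹) (v * cs.simple i * v⁻¹) = 1 := by simp [reflSign]
  rw [reflSign_mul, hconj] at hone
  rw [reflSign_mul, hconj, reflSign_mul, reflSign_simple_self, mul_inv_cancel_right,
    mul_left_comm, hone, mul_one]

lemma mem_rightInvSeq_of_isRightInversion {ω : List B} {t : W}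
    (h : cs.IsRightInversion (cs.wordProd ω) t) : t ∈ cs.rightInvSeq ω := by
  -- otherwise `t` has sign `-1` in `w * t`, making it a right inversion of `w * t`
  by_contra hnot
  obtain ⟨σ, hσ, hσω⟩ := cs.exists_isReduced (cs.wordProd ω * t)
  have hsign : reflSign cs (cs.wordProd σ) t = -1 := by
    rw [← hσω, reflSign_mul, reflSign_self cs h.1, h.1.mul_self, one_mul, h.1.inv,
      reflSign_wordProd, count_eq_zero_of_not_mem hnot, pow_zero, mul_one]
  have hmem : t ∈ cs.rightInvSeq σ := by
    by_contra hn
    rw [reflSign_wordProd, count_eq_zero_of_not_mem hn, pow_zero] at hsign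
    exact absurd hsign (by decide)
  have hlt := (cs.isRightInversion_of_mem_rightInvSeq hσ hmem).2
  rw [← hσω, mul_assoc, h.1.mul_self, mul_one] at hlt
  exact lt_asymm hlt h.2

lemma mem_leftInvSeq_of_isLeftInversion {ω : List B} {t : W}
    (h : cs.IsLeftInversion (cs.wordProd ω) t) : t ∈ cs.leftInvSeq ω := by
  rw [← isRightInversion_inv_iff, ← wordProd_reverse] at h
  simpa [rightInvSeq_reverse] using mem_rightInvSeq_of_isRightInversion cs h

theorem exists_wordProd_eraseIdx_eq_mul {ω : List B} {t : W}
    (h : cs.IsLeftInversion (cs.wordProd ω) t) :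
    ∃ j < ω.length, cs.wordProd (ω.eraseIdx j) = t * cs.wordProd ω := by
  obtain ⟨j, hj, rfl⟩ := getElem_of_mem (mem_leftInvSeq_of_isLeftInversion cs h)
  refine ⟨j, by simpa using hj, ?_⟩
  rw [← getD_leftInvSeq_mul_wordProd, getD_eq_getElem]

end StrongExchange

section BruhatOrder

variable {cs : CoxeterSystem M W} {i : B}

lemma isLeftDescent_simple_mul_self_iff {w : W} :
    cs.IsLeftDescent (cs.simple i * w) i ↔ ¬cs.IsLeftDescent w i := by
  rw [cs.isLeftDescent_iff_not_isLeftDescent_mul, cs.simple_mul_simple_cancel_left]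

lemma bruhatLE_mul_of_length_lt {x t : W} (ht : cs.IsReflection t)
    (h : cs.length x < cs.length (t * x)) : BruhatLE cs x (t * x) :=
  ReflTransGen.single ⟨t, ht, rfl, h⟩

lemma bruhatLE_simple_mul_of_not_isLeftDescent {x : W} (h : ¬cs.IsLeftDescent x i) :
    BruhatLE cs x (cs.simple i * x) :=
  bruhatLE_mul_of_length_lt (cs.isReflection_simple i) <| by
    rw [cs.not_isLeftDescent_iff] at h
    omega

lemma simple_mul_bruhatLE_of_isLeftDescent {x : W} (h : cs.IsLeftDescent x i) :
    BruhatLE cs (cs.simple i * x) x := by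
  rw [cs.isLeftDescent_iff_not_isLeftDescent_mul] at h
  simpa only [cs.simple_mul_simple_cancel_left] using bruhatLE_simple_mul_of_not_isLeftDescent h

lemma bruhatLE_wordProd_eraseIdx {σ : List B} (hσ : cs.IsReduced σ) {k : ℕ}
    (hk : k < σ.length) :
    BruhatLE cs (cs.wordProd (σ.eraseIdx k)) (cs.wordProd σ) := by
  have hk' : k < (cs.leftInvSeq σ).length := by simpa using hk
  have ht := cs.isReflection_of_mem_leftInvSeq σ (getElem_mem hk')
  have heq : (cs.leftInvSeq σ)[k] * cs.wordProd σ = cs.wordProd (σ.eraseIdx k) := by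
    rw [← getD_eq_getElem _ 1 hk', getD_leftInvSeq_mul_wordProd]
  have hlen : cs.length (cs.wordProd (σ.eraseIdx k)) < cs.length (cs.wordProd σ) := by
    have := cs.length_wordProd_le (σ.eraseIdx k)
    rw [length_eraseIdx_of_lt hk] at this
    rw [hσ]
    omega
  rw [← heq] at hlen ⊢
  refine ReflTransGen.single ⟨_, ht, ?_, hlen⟩
  rw [← mul_assoc, ht.mul_self, one_mul]

lemma BruhatStep.eq_simple_mul_or_simple_mul_le {b w : W} (hbw : BruhatStep cs b w) :
    b = cs.simple i * w ∨ BruhatLE cs (cs.simple i * b) (cs.simple i * w) := by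
  obtain ⟨t, ht, rfl, hlt⟩ := hbw
  obtain ⟨σ, hσ, hσw⟩ := cs.exists_isReduced (cs.simple i * (t * b))
  have hword : cs.wordProd (i :: σ) = t * b := by
    rw [wordProd_cons, ← hσw, cs.simple_mul_simple_cancel_left]
  have hinv : cs.IsLeftInversion (cs.wordProd (i :: σ)) t := by
    rwa [hword, IsLeftInversion, ← mul_assoc, ht.mul_self, one_mul, and_iff_right ht]
  -- strong exchange in the word `i :: σ` for `w`: deleting its first letter gives `s w`
  obtain ⟨j, hj, hjb⟩ := exists_wordProd_eraseIdx_eq_mul cs hinv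
  rw [hword, ← mul_assoc, ht.mul_self, one_mul] at hjb
  rcases j with _ | k
  · exact Or.inl (hjb.symm.trans hσw.symm)
  · right
    rw [eraseIdx_cons_succ, wordProd_cons] at hjb
    have hsb : cs.simple i * b = cs.wordProd (σ.eraseIdx k) := by
      rw [← hjb, cs.simple_mul_simple_cancel_left]
    rw [hsb, hσw]
    exact bruhatLE_wordProd_eraseIdx hσ (by simpa using hj)

theorem BruhatLE.le_simple_mul_of_isLeftDescent {u w : W} (h : BruhatLE cs u w)
    (hw : cs.IsLeftDescent w i) (hu : ¬cs.IsLeftDescent u i) :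
    BruhatLE cs u (cs.simple i * w) := by
  induction h with
  | refl => exact absurd hw hu
  | @tail b w hub hbw ih =>
    rcases hbw.eq_simple_mul_or_simple_mul_le (i := i) with rfl | hsb
    · exact hub
    by_cases hb : cs.IsLeftDescent b i
    · exact (ih hb).trans hsb
    · exact hub.trans ((bruhatLE_simple_mul_of_not_isLeftDescent hb).trans hsb)

theorem BruhatLE.le_of_le_simple_mul {u w : W} (h : BruhatLE cs u (cs.simple i * w))
    (hw : ¬cs.IsLeftDescent w i) (hu : ¬cs.IsLeftDescent u i) : BruhatLE cs u w := by
  simpa only [cs.simple_mul_simple_cancel_left] using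
    h.le_simple_mul_of_isLeftDescent (isLeftDescent_simple_mul_self_iff.mpr hw) hu

theorem BruhatLE.simple_mul_le_simple_mul_of_isLeftDescent {u w : W} (h : BruhatLE cs u w)
    (hw : cs.IsLeftDescent w i) (hu : cs.IsLeftDescent u i) :
    BruhatLE cs (cs.simple i * u) (cs.simple i * w) :=
  BruhatLE.le_simple_mul_of_isLeftDescent ((simple_mul_bruhatLE_of_isLeftDescent hu).trans h)
    hw (cs.isLeftDescent_iff_not_isLeftDescent_mul.mp hu)

theorem BruhatLE.simple_mul_le_simple_mul_of_not_isLeftDescent {u w : W} (h : BruhatLE cs u w)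
    (hu : ¬cs.IsLeftDescent u i) (hw : ¬cs.IsLeftDescent w i) :
    BruhatLE cs (cs.simple i * u) (cs.simple i * w) := by
  -- induction on `ℓ w` along the last step `c → w` of a chain from `u`; if `s c < c`, the
  -- induction hypothesis is applied to `u ≤ s c` instead
  induction hn : cs.length w using Nat.strong_induction_on generalizing u w with
  | _ n ih =>
  subst hn
  rcases h.cases_tail with rfl | ⟨c, huc, t, ht, rfl, hct⟩
  · exact ReflTransGen.refl
  have hsw := cs.not_isLeftDescent_iff.mp hw
  by_cases hc : cs.IsLeftDescent c i
  · have hsc := cs.isLeftDescent_iff.mp hc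
    have husc : BruhatLE cs (cs.simple i * u) c := by
      simpa only [cs.simple_mul_simple_cancel_left] using
        ih _ (by omega) (BruhatLE.le_simple_mul_of_isLeftDescent huc hc hu) hu
          (cs.isLeftDescent_iff_not_isLeftDescent_mul.mp hc) rfl
    exact husc.trans ((bruhatLE_mul_of_length_lt ht hct).trans
      (bruhatLE_simple_mul_of_not_isLeftDescent hw))
  · have hsc := cs.not_isLeftDescent_iff.mp hc
    refine (ih _ hct huc hu hc rfl).tail ⟨_, ht.conj (cs.simple i), ?_, by omega⟩
    simp [mul_assoc]

theorem BruhatLE.simple_mul_le_of_isLeftDescent {u w : W} (h : BruhatLE cs u w)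
    (hw : cs.IsLeftDescent w i) : BruhatLE cs (cs.simple i * u) w := by
  by_cases hu : cs.IsLeftDescent u i
  · exact (simple_mul_bruhatLE_of_isLeftDescent hu).trans h
  · simpa only [cs.simple_mul_simple_cancel_left] using
      (h.le_simple_mul_of_isLeftDescent hw hu).simple_mul_le_simple_mul_of_not_isLeftDescent hu
        (cs.isLeftDescent_iff_not_isLeftDescent_mul.mp hw)

theorem simple_mul_bruhatLE_simple_mul_iff {x y : W} (hx : ¬cs.IsLeftDescent x i)
    (hy : ¬cs.IsLeftDescent y i) :
    BruhatLE cs (cs.simple i * x) (cs.simple i * y) ↔ BruhatLE cs x y := by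
  refine ⟨fun h => ?_, fun h => h.simple_mul_le_simple_mul_of_not_isLeftDescent hx hy⟩
  rw [← isLeftDescent_simple_mul_self_iff] at hx hy
  simpa only [cs.simple_mul_simple_cancel_left] using
    h.simple_mul_le_simple_mul_of_isLeftDescent hy hx

end BruhatOrder

theorem mul_orderIso_of_not_le_general
    {B W : Type*} [Group W] {M : CoxeterMatrix B} (cs : CoxeterSystem M W)
    (u w : W) (huw : BruhatLE cs u w)
    (i : B) (hu : ¬ cs.IsLeftDescent u i) (hsu : ¬ BruhatLE cs (cs.simple i * u) w) :
    cs.length w < cs.length (cs.simple i * w) ∧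
    ∃ e : BruhatInterval cs u w ≃o BruhatInterval cs (cs.simple i * u) (cs.simple i * w),
      ∀ y : BruhatInterval cs u w, (e y).1 = cs.simple i * y.1 := by
  have hasc : ∀ x : BruhatInterval cs u w, ¬cs.IsLeftDescent x.1 i := fun x hx =>
    hsu ((x.2.1.simple_mul_le_of_isLeftDescent hx).trans x.2.2)
  have hw : ¬cs.IsLeftDescent w i := hasc ⟨w, huw, .refl⟩
  have hdesc : ∀ z : BruhatInterval cs (cs.simple i * u) (cs.simple i * w),
      ¬cs.IsLeftDescent (cs.simple i * z.1) i := fun z hz =>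
    hsu (z.2.1.trans (z.2.2.le_of_le_simple_mul hw (isLeftDescent_simple_mul_self_iff.mp hz)))
  have hmem : ∀ x : W, ¬cs.IsLeftDescent x i →
      (BruhatLE cs (cs.simple i * u) (cs.simple i * x) ∧
        BruhatLE cs (cs.simple i * x) (cs.simple i * w) ↔ BruhatLE cs u x ∧ BruhatLE cs x w) :=
    fun x hx => and_congr (simple_mul_bruhatLE_simple_mul_iff hu hx)
      (simple_mul_bruhatLE_simple_mul_iff hx hw)
  refine ⟨by have := cs.not_isLeftDescent_iff.mp hw; omega, ?_⟩
  let e : BruhatInterval cs u w ≃ BruhatInterval cs (cs.simple i * u) (cs.simple i * w) :=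
    { toFun x := ⟨cs.simple i * x.1, (hmem x.1 (hasc x)).mpr x.2⟩
      invFun z := ⟨cs.simple i * z.1, (hmem _ (hdesc z)).mp <| by
        simpa only [cs.simple_mul_simple_cancel_left] using z.2⟩
      left_inv _ := Subtype.ext (cs.simple_mul_simple_cancel_left i)
      right_inv _ := Subtype.ext (cs.simple_mul_simple_cancel_left i) }
  exact ⟨⟨e, fun {x y} => simple_mul_bruhatLE_simple_mul_iff (hasc x) (hasc y)⟩,
    fun _ => rfl⟩

/-- If `s ∉ D_L(u)` and `su ≰ w`, then `ℓ(sw) > ℓ(w)` and `x ↦ s * x` is a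
poset isomorphism from `[u,w]` onto `[su,sw]`. -/
theorem mul_orderIso_of_not_le
    {B W : Type*} [Group W] {M : CoxeterMatrix B} (cs : CoxeterSystem M W)
    (u w : W) (huw : BruhatLE cs u w) (hne : u ≠ w)
    (i : B) (hu : ¬ cs.IsLeftDescent u i) (hsu : ¬ BruhatLE cs (cs.simple i * u) w) :
    cs.length w < cs.length (cs.simple i * w) ∧
    ∃ e : BruhatInterval cs u w ≃o BruhatInterval cs (cs.simple i * u) (cs.simple i * w),
      ∀ y : BruhatInterval cs u w, (e y).1 = cs.simple i * y.1 :=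
  mul_orderIso_of_not_le_general cs u w huw i hu hsu

end Paper
end

section
/- Fix n ≥ 1 and suppose that for every smooth Bruhat interval [u,w] in the symmetric group S_{n+1} there exists s ∈ S ∖ D_L(u) such that either su ≰ w or sw < w. Then every smooth Bruhat interval [u,w] in S_{n+1} has a special matching. -/
namespace CoxeterSystem

open List

variable {B W : Type*} [Group W] {M : CoxeterMatrix B} (cs : CoxeterSystem M W)

local prefix:100 "s" => cs.simple
local prefix:100 "π" => cs.wordProd
local prefix:100 "ℓ" => cs.length
local prefix:100 "ris" => cs.rightInvSeq
local prefix:100 "lis" => cs.leftInvSeq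

theorem prod_map_alternatingWord_two_mul {G : Type*} [Monoid G] (f : B → G) (i j : B) (p : ℕ) :
    ((alternatingWord i j (2 * p)).map f).prod = (f i * f j) ^ p := by
  induction p with
  | zero => simp [alternatingWord]
  | succ p ih =>
    rw [show 2 * (p + 1) = 2 * p + 1 + 1 by ring, alternatingWord_succ, alternatingWord_succ]
    simp [ih, pow_succ]

theorem reverse_alternatingWord_two_mul (i j : B) (p : ℕ) :
    (alternatingWord i j (2 * p)).reverse = alternatingWord j i (2 * p) := by
  induction p with
  | zero => simp [alternatingWord]
  | succ p ih =>
    rw [show 2 * (p + 1) = 2 * p + 1 + 1 by ring, alternatingWord_succ, alternatingWord_succ,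
      alternatingWord_succ', alternatingWord_succ']
    simp [ih, parity_simps]

theorem leftInvSeq_alternatingWord_eq_append (i j : B) :
    ∃ P : List W, lis (alternatingWord i j (2 * M i j)) = P ++ P := by
  have hper : ∀ k (hk : k < M i j),
      (lis (alternatingWord i j (2 * M i j)))[M i j + k]'(by simp; omega) =
        (lis (alternatingWord i j (2 * M i j)))[k]'(by simp; omega) := by
    intro k hk
    rw [getElem_leftInvSeq_alternatingWord cs i j _ _ (by omega),
      getElem_leftInvSeq_alternatingWord cs i j _ _ (by omega),
      prod_alternatingWord_eq_mul_pow, prod_alternatingWord_eq_mul_pow,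
      if_neg (by simp [parity_simps]), if_neg (by simp [parity_simps]),
      show (2 * (M i j + k) + 1) / 2 = M i j + k by omega, show (2 * k + 1) / 2 = k by omega,
      pow_add, simple_mul_simple_pow', one_mul]
  refine ⟨(lis (alternatingWord i j (2 * M i j))).take (M i j), ?_⟩
  conv_lhs => rw [← take_append_drop (M i j) (lis (alternatingWord i j (2 * M i j)))]
  congr 1
  refine ext_getElem (by simp; omega) fun k h₁ h₂ => ?_
  simp only [getElem_drop, getElem_take]
  exact hper k (by simp at h₂; omega)

open scoped Classical

noncomputable def conjFlip (c : W) : Equiv.Perm (W × ℤˣ) :=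
  Equiv.prodShear (MulAut.conj c).toEquiv fun t => Equiv.mulLeft (if t = c then -1 else 1)

theorem conjFlip_apply (c t : W) (e : ℤˣ) :
    conjFlip c (t, e) = (c * t * c⁻¹, (if t = c then -1 else 1) * e) := rfl

theorem prod_map_conjFlip_simple (ω : List B) (t : W) (e : ℤˣ) :
    (ω.map fun i => conjFlip (s i)).prod (t, e) =
      (π ω * t * (π ω)⁻¹, (-1) ^ (ris ω).count t * e) := by
  induction ω with
  | nil => simp
  | cons i ω ih =>
    have hc : π ω * t * (π ω)⁻¹ = s i ↔ (π ω)⁻¹ * s i * π ω = t := by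
      constructor <;> intro h
      · rw [← h]; group
      · rw [← h]; group
    rw [map_cons, prod_cons, Equiv.Perm.mul_apply, ih, conjFlip_apply, wordProd_cons,
      rightInvSeq.eq_2, count_cons]
    refine Prod.ext (by group) ?_
    by_cases h : (π ω)⁻¹ * s i * π ω = t
    · simp [hc.mpr h, h, pow_succ, mul_comm]
    · simp [mt hc.mp h, h]

/-- Every `t` occurs an even number of times in the inversion sequence of the alternating word
of length `2 M i j`, whose product is `1`; so the signs cancel. -/
theorem isLiftable_conjFlip : M.IsLiftable fun i => conjFlip (s i) := by
  intro i j
  rw [← prod_map_alternatingWord_two_mul (fun i => conjFlip (s i)) i j]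
  obtain ⟨P, hP⟩ := cs.leftInvSeq_alternatingWord_eq_append j i
  have hπ : π (alternatingWord i j (2 * M i j)) = 1 := by
    rw [prod_alternatingWord_eq_mul_pow, if_pos (by simp), Nat.mul_div_cancel_left _ two_pos,
      simple_mul_simple_pow, one_mul]
  ext ⟨t, e⟩ : 1
  rw [prod_map_conjFlip_simple, hπ, ← reverse_alternatingWord_two_mul, rightInvSeq_reverse,
    M.symmetric, hP, count_reverse, count_append, ← two_mul, pow_mul]
  simp

/-- The classical permutation representation behind the strong exchange condition. -/
noncomputable def signedConj : W →* Equiv.Perm (W × ℤˣ) :=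
  cs.lift ⟨_, cs.isLiftable_conjFlip⟩

theorem signedConj_wordProd (ω : List B) (t : W) (e : ℤˣ) :
    cs.signedConj (π ω) (t, e) = (π ω * t * (π ω)⁻¹, (-1) ^ (ris ω).count t * e) := by
  rw [← prod_map_conjFlip_simple, wordProd, map_list_prod, map_map]
  congr 3
  exact funext fun i => cs.lift_apply_simple cs.isLiftable_conjFlip i

theorem signedConj_apply_fst (g t : W) (e : ℤˣ) :
    (cs.signedConj g (t, e)).1 = g * t * g⁻¹ := by
  obtain ⟨ω, rfl⟩ := cs.wordProd_surjective g
  rw [signedConj_wordProd]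

theorem signedConj_apply_neg (g t : W) (e : ℤˣ) :
    cs.signedConj g (t, -e) = ((cs.signedConj g (t, e)).1, -(cs.signedConj g (t, e)).2) := by
  obtain ⟨ω, rfl⟩ := cs.wordProd_surjective g
  simp [signedConj_wordProd]

theorem signedConj_apply_self {t : W} (ht : cs.IsReflection t) (e : ℤˣ) :
    cs.signedConj t (t, e) = (t, -e) := by
  obtain ⟨v, i, rfl⟩ := ht
  set t := v * s i * v⁻¹
  have hv : cs.signedConj v⁻¹ (t, e) = (s i, (cs.signedConj v⁻¹ (t, e)).2) :=
    Prod.ext (by rw [signedConj_apply_fst]; simp [t, mul_assoc]) rfl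
  have hs : cs.signedConj (s i) (s i, (cs.signedConj v⁻¹ (t, e)).2) =
      (s i, -(cs.signedConj v⁻¹ (t, e)).2) := by
    simp [signedConj, lift_apply_simple, conjFlip_apply]
  calc cs.signedConj t (t, e)
        = cs.signedConj v (cs.signedConj (s i) (cs.signedConj v⁻¹ (t, e))) := by
          simp [t, map_mul, Equiv.Perm.mul_apply]
    _ = (t, -e) := by
        rw [hv, hs, signedConj_apply_neg, ← hv, ← Equiv.Perm.mul_apply, ← map_mul]
        simp

/-- The strong exchange condition. -/
theorem mem_rightInvSeq_of_isRightInversion {ω : List B} {t : W}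
    (h : cs.IsRightInversion (π ω) t) : t ∈ ris ω := by
  obtain ⟨ω', hω', hω't⟩ := cs.exists_isReduced (π ω * t)
  have hπ : π ω = π ω' * t := by rw [← hω't, mul_assoc, h.1.mul_self, mul_one]
  have hnot : t ∉ ris ω' := fun hmem => by
    have := (cs.isRightInversion_of_mem_rightInvSeq hω' hmem).2
    rw [← hπ, ← hω't] at this
    exact absurd h.2 (not_lt.mpr this.le)
  have hsign := congrArg Prod.snd (cs.signedConj_wordProd ω t 1)
  rw [hπ, map_mul, Equiv.Perm.mul_apply, signedConj_apply_self cs h.1, signedConj_wordProd,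
    count_eq_zero_of_not_mem hnot] at hsign
  rw [← count_pos_iff]
  by_contra h0
  rw [Nat.eq_zero_of_not_pos h0] at hsign
  simp at hsign

theorem mem_leftInvSeq_of_isLeftInversion {ω : List B} {t : W}
    (h : cs.IsLeftInversion (π ω) t) : t ∈ lis ω := by
  rw [← isRightInversion_inv_iff, ← wordProd_reverse] at h
  simpa [rightInvSeq_reverse] using cs.mem_rightInvSeq_of_isRightInversion h

theorem exists_eraseIdx_of_isLeftInversion {ω : List B} {t : W}
    (h : cs.IsLeftInversion (π ω) t) : ∃ j < ω.length, t * π ω = π (ω.eraseIdx j) := by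
  obtain ⟨j, hj, rfl⟩ := getElem_of_mem (cs.mem_leftInvSeq_of_isLeftInversion h)
  rw [length_leftInvSeq] at hj
  refine ⟨j, hj, ?_⟩
  rw [← getD_leftInvSeq_mul_wordProd, getD_eq_getElem]

theorem isLeftDescent_simple_mul_iff {w : W} {i : B} :
    cs.IsLeftDescent (s i * w) i ↔ ¬cs.IsLeftDescent w i := by
  rw [isLeftDescent_iff_not_isLeftDescent_mul, simple_mul_simple_cancel_left]

theorem length_le_ncard_setOf_isReflection (h : {t : W | cs.IsReflection t}.Finite) (w : W) :
    ℓ w ≤ h.toFinset.card := by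
  obtain ⟨ω, hω, rfl⟩ := cs.exists_isReduced w
  rw [hω.eq, ← cs.length_leftInvSeq, ← toFinset_card_of_nodup hω.nodup_leftInvSeq]
  exact Finset.card_le_card fun t ht => by
    simpa using cs.isReflection_of_mem_leftInvSeq ω (mem_toFinset.mp ht)

theorem finite_of_finite_setOf_isReflection [Finite B] (h : {t : W | cs.IsReflection t}.Finite) :
    Finite W := by
  refine Set.finite_univ_iff.mp <|
    ((List.finite_length_le B h.toFinset.card).image cs.wordProd).subset fun w _ => ?_
  obtain ⟨ω, hω, rfl⟩ := cs.exists_isReduced w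
  exact ⟨ω, by simpa [← hω.eq] using cs.length_le_ncard_setOf_isReflection h (π ω), rfl⟩

theorem simple_mul_simple_comm_of_eq_two {i j : B} (h : M i j = 2) : s i * s j = s j * s i := by
  have hij := cs.simple_mul_simple_pow i j
  rw [h, pow_two, mul_eq_one_iff_eq_inv] at hij
  rw [hij, mul_inv_rev, inv_simple, inv_simple]

theorem simple_braid_of_eq_three {i j : B} (h : M i j = 3) :
    s i * s j * s i = s j * s i * s j := by
  have hij := cs.simple_mul_simple_pow i j
  rw [h, show (s i * s j) ^ 3 = (s i * s j * s i) * (s j * s i * s j) by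
    simp only [pow_succ, pow_zero, one_mul, mul_assoc], mul_eq_one_iff_eq_inv] at hij
  rw [hij]
  simp [mul_assoc]

section TypeA

variable {n : ℕ} (cs : CoxeterSystem (CoxeterMatrix.A n) W)

/-- `s a`, extended by `1` to `a ≥ n` so that indices can be shifted freely. -/
noncomputable def simpleNat (a : ℕ) : W := if h : a < n then cs.simple ⟨a, h⟩ else 1

local prefix:100 "σ" => cs.simpleNat

theorem simpleNat_mul_self (a : ℕ) : σ a * σ a = 1 := by
  unfold simpleNat
  split <;> simp

theorem simpleNat_comm {a c : ℕ} (h : c + 2 ≤ a ∨ a + 2 ≤ c) :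
    σ a * σ c = σ c * σ a := by
  unfold simpleNat
  split_ifs with ha hc <;> try simp
  exact cs.simple_mul_simple_comm_of_eq_two <| by
    simp [CoxeterMatrix.A, Fin.ext_iff]
    split_ifs <;> omega

theorem simpleNat_braid {a : ℕ} (h : a + 1 < n) :
    σ a * σ (a + 1) * σ a = σ (a + 1) * σ a * σ (a + 1) := by
  simp only [simpleNat, dif_pos h, dif_pos (show a < n by omega)]
  exact cs.simple_braid_of_eq_three (by simp [CoxeterMatrix.A, Fin.ext_iff])

theorem simpleNat_conj_simpleNat_conj {a c : ℕ} (h : c + 2 ≤ a ∨ a + 2 ≤ c) (x : W) :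
    σ c * (σ a * x * σ a) * σ c = σ a * (σ c * x * σ c) * σ a :=
  calc σ c * (σ a * x * σ a) * σ c
      = (σ c * σ a) * x * (σ a * σ c) := by simp only [mul_assoc]
    _ = (σ a * σ c) * x * (σ c * σ a) := by rw [cs.simpleNat_comm h, cs.simpleNat_comm h.symm]
    _ = σ a * (σ c * x * σ c) * σ a := by simp only [mul_assoc]

/-- The transposition `(a, a + k + 1)` of `S_{n+1}`, that is
`s_a ⋯ s_{a+k-1} s_{a+k} s_{a+k-1} ⋯ s_a`. -/
noncomputable def transposition : ℕ → ℕ → W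
  | a, 0 => σ a
  | a, k + 1 => σ a * transposition (a + 1) k * σ a

local notation "τ" => cs.transposition

theorem simpleNat_conj_transposition_of_far (k : ℕ) {a c : ℕ}
    (h : c + 2 ≤ a ∨ a + k + 2 ≤ c) : σ c * τ a k * σ c = τ a k := by
  induction k generalizing a with
  | zero =>
    rw [transposition, cs.simpleNat_comm (by omega), mul_assoc, simpleNat_mul_self, mul_one]
  | succ k ih =>
    rw [transposition, cs.simpleNat_conj_simpleNat_conj (by omega), ih (by omega)]

theorem transposition_succ_eq (k : ℕ) {a : ℕ} (h : a + k + 1 < n) :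
    τ a (k + 1) = σ (a + k + 1) * τ a k * σ (a + k + 1) := by
  induction k generalizing a with
  | zero => simpa [transposition] using cs.simpleNat_braid h
  | succ k ih =>
    rw [transposition, ih (by omega), cs.simpleNat_conj_simpleNat_conj (by omega),
      show a + 1 + k + 1 = a + (k + 1) + 1 by omega, transposition]

theorem simpleNat_conj_transposition_of_inner (k : ℕ) {a c : ℕ} (hac : a < c) (hca : c < a + k)
    (hn : a + k < n) : σ c * τ a k * σ c = τ a k := by
  induction k generalizing a with
  | zero => omega
  | succ k ih =>
    rcases (show c = a + 1 ∨ a + 2 ≤ c by omega) with rfl | hc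
    · obtain ⟨k, rfl⟩ : ∃ k', k = k' + 1 := ⟨k - 1, by omega⟩
      have hfar := cs.simpleNat_conj_transposition_of_far k (a := a + 2) (c := a) (by omega)
      calc σ (a + 1) * τ a (k + 2) * σ (a + 1)
          = (σ (a + 1) * σ a * σ (a + 1)) * τ (a + 2) k * (σ (a + 1) * σ a * σ (a + 1)) := by
            simp only [transposition, mul_assoc]
        _ = σ a * σ (a + 1) * (σ a * τ (a + 2) k * σ a) * σ (a + 1) * σ a := by
            rw [← cs.simpleNat_braid (by omega)]
            simp only [mul_assoc]
        _ = τ a (k + 2) := by rw [hfar]; simp only [transposition, mul_assoc]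
    · rw [transposition, cs.simpleNat_conj_simpleNat_conj (by omega),
        ih (by omega) (by omega) (by omega)]

theorem simpleNat_conj_transposition {c : ℕ} (hc : c < n) {a k : ℕ} (hak : a + k < n) :
    ∃ a' k', a' + k' < n ∧ σ c * τ a k * σ c = τ a' k' := by
  by_cases hfar : c + 2 ≤ a ∨ a + k + 2 ≤ c
  · exact ⟨a, k, hak, cs.simpleNat_conj_transposition_of_far k hfar⟩
  rcases (show c + 1 = a ∨ (c = a ∧ 0 < k) ∨ (a < c ∧ c < a + k) ∨ c = a + k ∨
    c = a + k + 1 by omega) with rfl | ⟨rfl, hk⟩ | ⟨hac, hca⟩ | rfl | rfl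
  · exact ⟨c, k + 1, by omega, rfl⟩
  · obtain ⟨k, rfl⟩ : ∃ k', k = k' + 1 := ⟨k - 1, by omega⟩
    refine ⟨c + 1, k, by omega, ?_⟩
    simp only [transposition, ← mul_assoc, simpleNat_mul_self, one_mul]
    rw [mul_assoc, simpleNat_mul_self, mul_one]
  · exact ⟨a, k, hak, cs.simpleNat_conj_transposition_of_inner k hac hca hak⟩
  · rcases k with _ | k
    · exact ⟨a, 0, hak, by simp [transposition, simpleNat_mul_self]⟩
    · refine ⟨a, k, by omega, ?_⟩
      rw [cs.transposition_succ_eq k (by omega), ← add_assoc]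
      simp only [← mul_assoc, simpleNat_mul_self, one_mul]
      rw [mul_assoc, simpleNat_mul_self, mul_one]
  · exact ⟨a, k + 1, by omega, (cs.transposition_succ_eq k (by omega)).symm⟩

theorem exists_eq_transposition {t : W} (ht : cs.IsReflection t) :
    ∃ a k, a + k < n ∧ t = τ a k := by
  obtain ⟨v, i, rfl⟩ := ht
  induction v using cs.simple_induction_left with
  | one => exact ⟨i, 0, by omega, by simp [transposition, simpleNat]⟩
  | mul_simple_left v j ih =>
    obtain ⟨a, k, hak, hv⟩ := ih
    obtain ⟨a', k', hak', hconj⟩ := cs.simpleNat_conj_transposition j.isLt hak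
    refine ⟨a', k', hak', ?_⟩
    rw [← hconj, ← hv, simpleNat, dif_pos j.isLt, mul_inv_rev, inv_simple]
    simp only [mul_assoc]

end TypeA

theorem finite_of_A {n : ℕ} (cs : CoxeterSystem (CoxeterMatrix.A n) W) : Finite W :=
  cs.finite_of_finite_setOf_isReflection <|
    ((Set.finite_Iio n).prod (Set.finite_Iio n)).image (fun p => cs.transposition p.1 p.2)
      |>.subset fun t ht => by
        obtain ⟨a, k, hak, rfl⟩ := cs.exists_eq_transposition ht
        exact ⟨(a, k), ⟨by simp; omega, by simp; omega⟩, rfl⟩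

end CoxeterSystem

namespace Paper

open CoxeterSystem List

variable {B W : Type*} [Group W] {M : CoxeterMatrix B}

section Bruhat

variable {cs : CoxeterSystem M W} {i : B} {t u v w x y z : W}

local prefix:100 "s" => cs.simple
local prefix:100 "ℓ" => cs.length

theorem bruhatLE_mul_of_isReflection (ht : cs.IsReflection t) (h : ℓ y < ℓ (t * y)) :
    BruhatLE cs y (t * y) :=
  .single ⟨t, ht, rfl, h⟩

theorem bruhatLE_simple_mul (h : ¬cs.IsLeftDescent w i) : BruhatLE cs w (s i * w) :=
  bruhatLE_mul_of_isReflection (cs.isReflection_simple i) <| by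
    rw [cs.not_isLeftDescent_iff.mp h]
    omega

theorem simple_mul_bruhatLE (h : cs.IsLeftDescent w i) : BruhatLE cs (s i * w) w := by
  have h' := bruhatLE_simple_mul (cs.isLeftDescent_iff_not_isLeftDescent_mul.mp h)
  rwa [simple_mul_simple_cancel_left] at h'

theorem BruhatLE.eq_of_length_le (h : BruhatLE cs x y) (hl : ℓ y ≤ ℓ x) : x = y :=
  of_not_not fun hne => absurd (h.length_lt hne) hl.not_gt

/-- `s i z = (s i t s i) (s i y)`, and `s i t s i` is again a reflection. -/
theorem simple_mul_bruhatLE_simple_mul (ht : cs.IsReflection t) (hz : z = t * y)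
    (h : ℓ (s i * y) < ℓ (s i * z)) : BruhatLE cs (s i * y) (s i * z) := by
  have hz' : s i * z = (s i * t * (s i)⁻¹) * (s i * y) := by rw [hz]; group
  rw [hz'] at h ⊢
  exact bruhatLE_mul_of_isReflection (ht.conj _) h

/-- If `ℓ (s i z) < ℓ (s i y)`, the strong exchange condition applied to `s i` followed by a
reduced word of `s i z` forces `s i y = z`. -/
theorem simple_mul_eq_or_bruhatLE_of_step (ht : cs.IsReflection t) (hz : z = t * y)
    (hyz : ℓ y < ℓ z) (hy : ¬cs.IsLeftDescent y i) (hzi : cs.IsLeftDescent z i) :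
    s i * y = z ∨ BruhatLE cs (s i * y) (s i * z) := by
  rw [not_isLeftDescent_iff] at hy
  rw [isLeftDescent_iff] at hzi
  rcases lt_or_ge (ℓ (s i * y)) (ℓ (s i * z)) with h | h
  · exact .inr (simple_mul_bruhatLE_simple_mul ht hz h)
  left
  obtain ⟨ω, hω, hωz⟩ := cs.exists_isReduced (s i * z)
  have hzω : z = cs.wordProd (i :: ω) := by
    rw [wordProd_cons, ← hωz, simple_mul_simple_cancel_left]
  have hty : t * z = y := by rw [hz, ← mul_assoc, ht.mul_self, one_mul]
  have hinv : cs.IsLeftInversion (cs.wordProd (i :: ω)) t :=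
    ⟨ht, by rw [← hzω, hty]; exact hyz⟩
  obtain ⟨j, hj, hjy⟩ := cs.exists_eraseIdx_of_isLeftInversion hinv
  rw [← hzω, hty] at hjy
  cases j with
  | zero => rw [hjy, eraseIdx_cons_zero, ← hωz, simple_mul_simple_cancel_left]
  | succ j =>
    exfalso
    rw [eraseIdx_cons_succ, wordProd_cons] at hjy
    have hlen := cs.length_wordProd_le (ω.eraseIdx j)
    rw [← cs.simple_mul_simple_cancel_left (w := cs.wordProd (ω.eraseIdx j)) i, ← hjy,
      length_eraseIdx_of_lt (by simpa using hj), ← hω.eq, ← hωz] at hlen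
    omega

theorem BruhatLE.lift_of_not_isLeftDescent (h : BruhatLE cs v z) (hv : ¬cs.IsLeftDescent v i) :
    (¬cs.IsLeftDescent z i → BruhatLE cs (s i * v) (s i * z)) ∧
      (cs.IsLeftDescent z i → BruhatLE cs (s i * v) z) := by
  induction h with
  | refl => exact ⟨fun _ => .refl, fun h => absurd h hv⟩
  | @tail y z _ hyz ih =>
    obtain ⟨t, ht, hz, hlt⟩ := hyz
    by_cases hy : cs.IsLeftDescent y i
    · have hyz : BruhatLE cs y z := .single ⟨t, ht, hz, hlt⟩
      exact ⟨fun hzi => ((ih.2 hy).trans hyz).trans (bruhatLE_simple_mul hzi),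
        fun _ => (ih.2 hy).trans hyz⟩
    refine ⟨fun hzi => (ih.1 hy).trans (simple_mul_bruhatLE_simple_mul ht hz ?_),
      fun hzi => (ih.1 hy).trans ?_⟩
    · rw [not_isLeftDescent_iff] at hy hzi
      omega
    · rcases simple_mul_eq_or_bruhatLE_of_step ht hz hlt hy hzi with h | h
      · rw [h]
      · exact h.trans (simple_mul_bruhatLE hzi)

theorem BruhatLE.lift_of_isLeftDescent (h : BruhatLE cs u z) (hz : cs.IsLeftDescent z i) :
    (cs.IsLeftDescent u i → BruhatLE cs (s i * u) (s i * z)) ∧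
      (¬cs.IsLeftDescent u i → BruhatLE cs u (s i * z)) := by
  induction h with
  | refl => exact ⟨fun _ => .refl, fun h' => absurd hz h'⟩
  | @tail y z huy hyz ih =>
    obtain ⟨t, ht, hz', hlt⟩ := hyz
    by_cases hy : cs.IsLeftDescent y i
    · have hyz : BruhatLE cs (s i * y) (s i * z) := simple_mul_bruhatLE_simple_mul ht hz' (by
        rw [isLeftDescent_iff] at hy hz
        omega)
      exact ⟨fun hu => ((ih hy).1 hu).trans hyz, fun hu => ((ih hy).2 hu).trans hyz⟩
    have hyz : BruhatLE cs y (s i * z) := by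
      rcases simple_mul_eq_or_bruhatLE_of_step ht hz' hlt hy hz with h | h
      · rw [← h, simple_mul_simple_cancel_left]
        exact .refl
      · exact (bruhatLE_simple_mul hy).trans h
    exact ⟨fun hu => ((simple_mul_bruhatLE hu).trans huy).trans hyz, fun _ => huy.trans hyz⟩

theorem BruhatLE.simple_mul_simple_mul_of_not_isLeftDescent (h : BruhatLE cs v z)
    (hv : ¬cs.IsLeftDescent v i) (hz : ¬cs.IsLeftDescent z i) :
    BruhatLE cs (s i * v) (s i * z) :=
  (h.lift_of_not_isLeftDescent hv).1 hz

theorem BruhatLE.simple_mul_le (h : BruhatLE cs v z) (hv : ¬cs.IsLeftDescent v i)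
    (hz : cs.IsLeftDescent z i) : BruhatLE cs (s i * v) z :=
  (h.lift_of_not_isLeftDescent hv).2 hz

theorem BruhatLE.simple_mul_simple_mul_of_isLeftDescent (h : BruhatLE cs v z)
    (hv : cs.IsLeftDescent v i) (hz : cs.IsLeftDescent z i) :
    BruhatLE cs (s i * v) (s i * z) :=
  (h.lift_of_isLeftDescent hz).1 hv

theorem BruhatLE.le_simple_mul (h : BruhatLE cs v z) (hv : ¬cs.IsLeftDescent v i)
    (hz : cs.IsLeftDescent z i) : BruhatLE cs v (s i * z) :=
  (h.lift_of_isLeftDescent hz).2 hv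

theorem BruhatLE.exists_bruhatLE_length_add_one_eq (h : BruhatLE cs u w) (hne : u ≠ w) :
    ∃ m, BruhatLE cs u m ∧ BruhatLE cs m w ∧ ℓ m + 1 = ℓ w := by
  induction hl : ℓ w using Nat.strong_induction_on generalizing u w with
  | _ l ih =>
    subst hl
    obtain ⟨i, hw⟩ := cs.exists_leftDescent_of_ne_one (w := w) fun h1 => by
      have := h.length_lt hne
      rw [h1, cs.length_one] at this
      omega
    have hlw := cs.isLeftDescent_iff.mp hw
    by_cases hu : BruhatLE cs u (s i * w)
    · exact ⟨s i * w, hu, simple_mul_bruhatLE hw, hlw⟩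
    have hui : cs.IsLeftDescent u i := of_not_not fun hui => hu (h.le_simple_mul hui hw)
    have hsu : ¬cs.IsLeftDescent (s i * u) i := cs.isLeftDescent_iff_not_isLeftDescent_mul.mp hui
    have hsw : ¬cs.IsLeftDescent (s i * w) i := cs.isLeftDescent_iff_not_isLeftDescent_mul.mp hw
    obtain ⟨m, hum, hmw, hlm⟩ := ih _ (by omega)
      (h.simple_mul_simple_mul_of_isLeftDescent hui hw) (fun he => hne (mul_left_cancel he)) rfl
    by_cases hm : cs.IsLeftDescent m i
    · have := hum.simple_mul_le hsu hm
      rw [simple_mul_simple_cancel_left] at this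
      exact absurd (this.trans hmw) hu
    refine ⟨s i * m, ?_, ?_, by rw [cs.not_isLeftDescent_iff.mp hm]; omega⟩
    · simpa using hum.simple_mul_simple_mul_of_not_isLeftDescent hsu hm
    · simpa using hmw.simple_mul_simple_mul_of_not_isLeftDescent hm hsw

theorem BruhatInterval.lt_iff {x y : BruhatInterval cs u w} :
    x < y ↔ BruhatLE cs x.1 y.1 ∧ x.1 ≠ y.1 := by
  rw [lt_iff_le_and_ne, Ne, Subtype.ext_iff]
  rfl

theorem BruhatInterval.covBy_iff {x y : BruhatInterval cs u w} :
    x ⋖ y ↔ BruhatLE cs x.1 y.1 ∧ ℓ y.1 = ℓ x.1 + 1 := by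
  constructor
  · intro hxy
    have hlt := BruhatInterval.lt_iff.mp hxy.1
    obtain ⟨m, hxm, hmy, hlm⟩ := hlt.1.exists_bruhatLE_length_add_one_eq hlt.2
    obtain rfl : x.1 = m := of_not_not fun hne =>
      hxy.2 (c := ⟨m, x.2.1.trans hxm, hmy.trans y.2.2⟩)
        (BruhatInterval.lt_iff.mpr ⟨hxm, hne⟩)
        (BruhatInterval.lt_iff.mpr ⟨hmy, fun he => by subst he; omega⟩)
    exact ⟨hlt.1, hlm.symm⟩
  · rintro ⟨hxy, hl⟩
    refine ⟨BruhatInterval.lt_iff.mpr ⟨hxy, fun he => by rw [he] at hl; omega⟩,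
      fun c hxc hcy => ?_⟩
    have h₁ := (BruhatInterval.lt_iff.mp hxc).1.length_lt (BruhatInterval.lt_iff.mp hxc).2
    have h₂ := (BruhatInterval.lt_iff.mp hcy).1.length_lt (BruhatInterval.lt_iff.mp hcy).2
    omega

theorem simple_mul_mem_bruhatInterval (hu : ¬cs.IsLeftDescent u i) (hw : cs.IsLeftDescent w i)
    (hx : BruhatLE cs u x ∧ BruhatLE cs x w) :
    BruhatLE cs u (s i * x) ∧ BruhatLE cs (s i * x) w := by
  by_cases hxi : cs.IsLeftDescent x i
  · exact ⟨hx.1.le_simple_mul hu hxi, (simple_mul_bruhatLE hxi).trans hx.2⟩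
  · exact ⟨hx.1.trans (bruhatLE_simple_mul hxi), hx.2.simple_mul_le hxi hw⟩

theorem isSpecialMatching_simple_mul (hu : ¬cs.IsLeftDescent u i) (hw : cs.IsLeftDescent w i) :
    IsSpecialMatching fun x : BruhatInterval cs u w =>
      (⟨s i * x.1, simple_mul_mem_bruhatInterval hu hw x.2⟩ : BruhatInterval cs u w) := by
  refine ⟨⟨fun x => Subtype.ext (simple_mul_simple_cancel_left _ _), fun x => ?_⟩,
    fun x y hxy => ?_⟩
  · simp only [BruhatInterval.covBy_iff]
    by_cases hx : cs.IsLeftDescent x.1 i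
    · exact .inl ⟨simple_mul_bruhatLE hx, (cs.isLeftDescent_iff.mp hx).symm⟩
    · exact .inr ⟨bruhatLE_simple_mul hx, cs.not_isLeftDescent_iff.mp hx⟩
  obtain ⟨hle, hl⟩ := BruhatInterval.covBy_iff.mp hxy
  have hne : s i * x.1 ≠ s i * y.1 := fun he =>
    (BruhatInterval.lt_iff.mp hxy.1).2 (mul_left_cancel he)
  by_cases hx : cs.IsLeftDescent x.1 i
  · refine .inr (BruhatInterval.lt_iff.mpr ⟨?_, hne⟩)
    by_cases hy : cs.IsLeftDescent y.1 i
    · exact hle.simple_mul_simple_mul_of_isLeftDescent hx hy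
    · exact ((simple_mul_bruhatLE hx).trans hle).trans (bruhatLE_simple_mul hy)
  by_cases hy : cs.IsLeftDescent y.1 i
  · have hxy' := (hle.le_simple_mul hx hy).eq_of_length_le (by rw [isLeftDescent_iff] at hy; omega)
    exact .inl (Subtype.ext (show s i * x.1 = y.1 by rw [hxy', simple_mul_simple_cancel_left]))
  · exact .inr (BruhatInterval.lt_iff.mpr
      ⟨hle.simple_mul_simple_mul_of_not_isLeftDescent hx hy, hne⟩)

theorem IsSpecialMatching.orderIsoConj {α β : Type*} [PartialOrder α] [PartialOrder β]
    (e : α ≃o β) {f : β → β} (hf : IsSpecialMatching f) :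
    IsSpecialMatching fun x => e.symm (f (e x)) := by
  obtain ⟨⟨hinv, hcov⟩, hspec⟩ := hf
  refine ⟨⟨fun x => by simp [hinv (e x)], fun x => ?_⟩, fun x y hxy => ?_⟩
  · rw [← apply_covBy_apply_iff e, ← apply_covBy_apply_iff e (a := x),
      OrderIso.apply_symm_apply]
    exact hcov (e x)
  · rcases hspec _ _ ((apply_covBy_apply_iff e).mpr hxy) with h | h
    · exact .inl (by simp [h])
    · exact .inr (e.symm.lt_iff_lt.mpr h)

theorem not_isLeftDescent_of_not_simple_mul_bruhatLE (hu : ¬cs.IsLeftDescent u i)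
    (hsu : ¬BruhatLE cs (s i * u) w) (hux : BruhatLE cs u x) (hxw : BruhatLE cs x w) :
    ¬cs.IsLeftDescent x i :=
  fun hx => hsu ((hux.simple_mul_le hu hx).trans hxw)

theorem simple_mul_mem_bruhatInterval_iff (huw : BruhatLE cs u w) (hu : ¬cs.IsLeftDescent u i)
    (hsu : ¬BruhatLE cs (s i * u) w) :
    (BruhatLE cs (s i * u) (s i * x) ∧ BruhatLE cs (s i * x) (s i * w)) ↔
      (BruhatLE cs u x ∧ BruhatLE cs x w) := by
  have hw := not_isLeftDescent_of_not_simple_mul_bruhatLE hu hsu huw .refl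
  constructor
  · rintro ⟨h₁, h₂⟩
    have hsw := cs.isLeftDescent_simple_mul_iff.mpr hw
    have hsx : cs.IsLeftDescent (s i * x) i := cs.isLeftDescent_simple_mul_iff.mpr fun hx => by
      have h₃ : BruhatLE cs (s i * x) w := by
        simpa using h₂.le_simple_mul (fun h => cs.isLeftDescent_simple_mul_iff.mp h hx) hsw
      exact hsu (h₁.trans h₃)
    have h₃ :=
      h₁.simple_mul_simple_mul_of_isLeftDescent (cs.isLeftDescent_simple_mul_iff.mpr hu) hsx
    have h₄ := h₂.simple_mul_simple_mul_of_isLeftDescent hsx hsw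
    simp only [simple_mul_simple_cancel_left] at h₃ h₄
    exact ⟨h₃, h₄⟩
  · rintro ⟨h₁, h₂⟩
    have hx := not_isLeftDescent_of_not_simple_mul_bruhatLE hu hsu h₁ h₂
    exact ⟨h₁.simple_mul_simple_mul_of_not_isLeftDescent hu hx,
      h₂.simple_mul_simple_mul_of_not_isLeftDescent hx hw⟩

def simpleMulOrderIso (huw : BruhatLE cs u w) (hu : ¬cs.IsLeftDescent u i)
    (hsu : ¬BruhatLE cs (s i * u) w) :
    BruhatInterval cs u w ≃o BruhatInterval cs (s i * u) (s i * w) where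
  toEquiv := (Equiv.mulLeft (s i)).subtypeEquiv fun _ =>
    (simple_mul_mem_bruhatInterval_iff huw hu hsu).symm
  map_rel_iff' {x y} := by
    have hx := not_isLeftDescent_of_not_simple_mul_bruhatLE hu hsu x.2.1 x.2.2
    have hy := not_isLeftDescent_of_not_simple_mul_bruhatLE hu hsu y.2.1 y.2.2
    refine ⟨fun h => ?_, fun h => h.simple_mul_simple_mul_of_not_isLeftDescent hx hy⟩
    have h' : BruhatLE cs (s i * x.1) (s i * y.1) := h
    have h'' := h'.simple_mul_simple_mul_of_isLeftDescent (cs.isLeftDescent_simple_mul_iff.mpr hx)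
      (cs.isLeftDescent_simple_mul_iff.mpr hy)
    rwa [simple_mul_simple_cancel_left, simple_mul_simple_cancel_left] at h''

theorem bruhatDeg_simple_mul (huw : BruhatLE cs u w) (hu : ¬cs.IsLeftDescent u i)
    (hsu : ¬BruhatLE cs (s i * u) w) :
    bruhatDeg cs (s i * u) (s i * w) (s i * u) = bruhatDeg cs u w u := by
  refine Nat.card_congr ((Equiv.mulLeft (s i)).subtypeEquiv fun x => ?_).symm
  rw [Equiv.coe_mulLeft, simple_mul_mem_bruhatInterval_iff huw hu hsu,
    show (s i * u)⁻¹ * (s i * x) = u⁻¹ * x by group]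

theorem exists_isSpecialMatching_of_finite [Finite W]
    (H : ∀ u w : W, BruhatLE cs u w → u ≠ w →
      bruhatDeg cs u w u = ℓ w - ℓ u →
      ∃ i : B, ¬cs.IsLeftDescent u i ∧
        (¬BruhatLE cs (s i * u) w ∨ (BruhatLE cs (s i * w) w ∧ s i * w ≠ w)))
    (huw : BruhatLE cs u w) (hne : u ≠ w) (hdeg : bruhatDeg cs u w u = ℓ w - ℓ u) :
    ∃ f : BruhatInterval cs u w → BruhatInterval cs u w, IsSpecialMatching f := by
  obtain ⟨N, hN⟩ := (Set.finite_range cs.length).bddAbove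
  induction hk : N - ℓ w using Nat.strong_induction_on generalizing u w with
  | _ k ih =>
    obtain ⟨i, hu, hsu | ⟨hsw, hsw'⟩⟩ := H u w huw hne hdeg
    · have hw := not_isLeftDescent_of_not_simple_mul_bruhatLE hu hsu huw .refl
      have hlw := cs.not_isLeftDescent_iff.mp hw
      have hlu := cs.not_isLeftDescent_iff.mp hu
      have hsN := hN ⟨s i * w, rfl⟩
      obtain ⟨f, hf⟩ := ih _ (by omega) (huw.simple_mul_simple_mul_of_not_isLeftDescent hu hw)
        (fun h => hne (mul_left_cancel h))
        (by rw [bruhatDeg_simple_mul huw hu hsu, hdeg]; omega) rfl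
      exact ⟨_, hf.orderIsoConj (simpleMulOrderIso huw hu hsu)⟩
    · exact ⟨_, isSpecialMatching_simple_mul hu (hsw.length_lt hsw')⟩

end Bruhat

theorem conjC4_implies_special_matching_general
    {W : Type*} [Group W] {n : ℕ}
    (cs : CoxeterSystem (CoxeterMatrix.Aₙ n) W)
    (H : ∀ u w : W, BruhatLE cs u w → u ≠ w →
      bruhatDeg cs u w u = cs.length w - cs.length u →
      ∃ i : Fin n, ¬ cs.IsLeftDescent u i ∧
        (¬ BruhatLE cs (cs.simple i * u) w ∨
          (BruhatLE cs (cs.simple i * w) w ∧ cs.simple i * w ≠ w))) :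
    ∀ u w : W, BruhatLE cs u w → u ≠ w →
      bruhatDeg cs u w u = cs.length w - cs.length u →
      ∃ f : BruhatInterval cs u w → BruhatInterval cs u w, IsSpecialMatching f := by
  have := cs.finite_of_A
  exact fun u w => exists_isSpecialMatching_of_finite H

/-- Suppose that for every smooth Bruhat interval `[u,w]` in the symmetric
group `S_(n+1)` (type `Aₙ`) there is a simple reflection `s ∉ D_L(u)` with `su ≰ w` or
`sw < w`. Then every smooth Bruhat interval in `S_(n+1)` has a special matching. -/
theorem conjC4_implies_special_matching
    {W : Type*} [Group W] {n : ℕ} (hn : 1 ≤ n)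
    (cs : CoxeterSystem (CoxeterMatrix.Aₙ n) W)
    (H : ∀ u w : W, BruhatLE cs u w → u ≠ w →
      bruhatDeg cs u w u = cs.length w - cs.length u →
      ∃ i : Fin n, ¬ cs.IsLeftDescent u i ∧
        (¬ BruhatLE cs (cs.simple i * u) w ∨
          (BruhatLE cs (cs.simple i * w) w ∧ cs.simple i * w ≠ w))) :
    ∀ u w : W, BruhatLE cs u w → u ≠ w →
      bruhatDeg cs u w u = cs.length w - cs.length u →
      ∃ f : BruhatInterval cs u w → BruhatInterval cs u w, IsSpecialMatching f :=
  conjC4_implies_special_matching_general cs H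

end Paper
end
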